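/- arXiv:1112.3716 — 5 statements merged into one kernel-verified Lean document; each statement's English description precedes it below -/
import Mathlib

section
/- Let p1, p2, p3 ∈ (1,∞) satisfy 1/p1 + 1/p2 + 1/p3 = 2. There exist η ∈ (0,1) and C < ∞, depending only on (p1,p2,p3), such that for every discrete group G and all nonnegative functions f_j ∈ ℓ^{p_j}(G) (j = 1,2,3), ∑_{x,y∈G} f1(x) f2(y) f3(x+y) ≤ C · ∏_{j=1}^3 ‖f_j‖_{p_j}^{1−η} · ∏_{j=1}^3 ( sup_{k∈ℤ} 2^k |E_{j,k}|^{1/p_j} )^η, where E_{j,k} = {x ∈ G : 2^k ≤ f_j(x) < 2^{k+1}} and |E| denotes the cardinality of E. -/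
/-- The ℓ^p norm of a nonnegative (real-valued) function on a discrete group. -/
noncomputable def pnormR {G : Type*} (f : G → ℝ) (p : ℝ) : ℝ :=
  (∑' x, |f x| ^ p) ^ (1 / p)

/-- The dyadic level set E_k = {x : 2^k ≤ f(x) < 2^{k+1}} of a nonnegative function. -/
def levelSet {G : Type*} (f : G → ℝ) (k : ℤ) : Set G :=
  {x | (2 : ℝ) ^ k ≤ f x ∧ f x < (2 : ℝ) ^ (k + 1)}

/-- sup_{k ∈ ℤ} 2^k |E_k|^{1/p}, where |E| denotes cardinality. -/
noncomputable def lorentzSup {G : Type*} (f : G → ℝ) (p : ℝ) : ℝ :=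
  ⨆ k : ℤ, (2 : ℝ) ^ k * (Nat.card ↥(levelSet f k) : ℝ) ^ (1 / p)

/-!
Bound each `f_j` by its dyadic decomposition `∑_k 2^(k+1) 1_{E_{j,k}}`. Since any two of `x`, `y`,
`x + y` determine the third, three level sets contribute at most
`min(|E₁||E₂|, |E₁||E₃|, |E₂||E₃|)`, and as `∑ 1/p_j = 2` with every `1/p_j < 1`, this minimum is
at most `∏ |E_j|^(1/p_j)` times a factor `2^(-ε|n₁ - n₂| - ε|n₁ - n₃|)`, where
`n_j = ⌊log₂ |E_j|⌋` is the size class of `E_j`. Within one size class the masses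
`λ_k = 2^k |E_k|^(1/p)` grow geometrically in `k`, so their sum is comparable to the largest one,
and `λ = λ^(1/2) λ^(1/2) ≤ (sup λ)^(1/2) (∑_class λ^p)^(1/(2p))`. Hölder's inequality on `ℤ³` with
exponents `2p_j` (whose reciprocals sum to `1`), against the summable weights, bounds the sum over
classes by `∏ ‖f_j‖_(p_j)^(1/2)`; hence `η = 1/2`.
-/

open scoped ENNReal
open ENNReal (ofReal)

namespace YoungLorentz

lemma le_convex_combination {m A B C α β γ : ℝ} (hA : m ≤ A) (hB : m ≤ B) (hC : m ≤ C)
    (hα : 0 ≤ α) (hβ : 0 ≤ β) (hγ : 0 ≤ γ) (hs : α + β + γ = 1) :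
    m ≤ α * A + β * B + γ * C := by
  linear_combination (-m) * hs + mul_le_mul_of_nonneg_left hA hα +
    mul_le_mul_of_nonneg_left hB hβ + mul_le_mul_of_nonneg_left hC hγ

lemma min_add_mul_abs_sub_le {u₁ u₂ u₃ ε t₁ t₂ t₃ : ℝ} (hu : u₁ + u₂ + u₃ = 2) (hε : 0 ≤ ε)
    (hε₁ : 2 * ε ≤ 1 - u₁) (hε₂ : 2 * ε ≤ 1 - u₂) (hε₃ : 2 * ε ≤ 1 - u₃) :
    min (t₁ + t₂) (min (t₁ + t₃) (t₂ + t₃)) + ε * |t₁ - t₂| + ε * |t₁ - t₃|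
      ≤ u₁ * t₁ + u₂ * t₂ + u₃ * t₃ := by
  set m := min (t₁ + t₂) (min (t₁ + t₃) (t₂ + t₃))
  have hA : m ≤ t₁ + t₂ := min_le_left _ _
  have hB : m ≤ t₁ + t₃ := (min_le_right _ _).trans (min_le_left _ _)
  have hC : m ≤ t₂ + t₃ := (min_le_right _ _).trans (min_le_right _ _)
  -- for `|σ|, |τ| ≤ 1` (later the signs of `t₁ - t₂`, `t₁ - t₃`) the convex weights
  -- `1 - u₃ - ετ, 1 - u₂ - εσ, 1 - u₁ + ε(σ + τ)` reproduce the right-hand side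
  have key : ∀ σ τ : ℝ, |σ| ≤ 1 → |τ| ≤ 1 →
      m + ε * (σ * (t₁ - t₂)) + ε * (τ * (t₁ - t₃)) ≤ u₁ * t₁ + u₂ * t₂ + u₃ * t₃ := by
    intro σ τ hσ hτ
    have := le_convex_combination hA hB hC (α := 1 - u₃ - ε * τ) (β := 1 - u₂ - ε * σ)
      (γ := 1 - u₁ + ε * (σ + τ)) (by nlinarith [abs_le.1 hτ]) (by nlinarith [abs_le.1 hσ])
      (by nlinarith [abs_le.1 hσ, abs_le.1 hτ]) (by linarith)
    linear_combination this - (t₁ + t₂ + t₃) * hu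
  have sign : ∀ x : ℝ, ∃ σ : ℝ, |σ| ≤ 1 ∧ σ * x = |x| := fun x => by
    rcases le_total 0 x with hx | hx
    · exact ⟨1, by simp, by simp [abs_of_nonneg hx]⟩
    · exact ⟨-1, by simp, by simp [abs_of_nonpos hx]⟩
  obtain ⟨σ, hσ, hσx⟩ := sign (t₁ - t₂)
  obtain ⟨τ, hτ, hτx⟩ := sign (t₁ - t₃)
  simpa only [hσx, hτx] using key σ τ hσ hτ

lemma min_le_sub_mul_abs_sub {u₁ u₂ u₃ ε t₁ t₂ t₃ n₁ n₂ n₃ : ℝ} (hu : u₁ + u₂ + u₃ = 2)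
    (hε : 0 ≤ ε) (hε₁ : 2 * ε ≤ 1 - u₁) (hε₂ : 2 * ε ≤ 1 - u₂) (hε₃ : 2 * ε ≤ 1 - u₃)
    (h₁ : |t₁ - n₁| ≤ 1) (h₂ : |t₂ - n₂| ≤ 1) (h₃ : |t₃ - n₃| ≤ 1) :
    min (t₁ + t₂) (min (t₁ + t₃) (t₂ + t₃)) ≤
      2 + (u₁ * t₁ + u₂ * t₂ + u₃ * t₃) - ε * |n₁ - n₂| - ε * |n₁ - n₃| := by
  have key := min_add_mul_abs_sub_le (t₁ := t₁) (t₂ := t₂) (t₃ := t₃) hu hε hε₁ hε₂ hε₃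
  have d₁₂ : |n₁ - n₂| ≤ |t₁ - t₂| + 2 := by
    rw [abs_le] at h₁ h₂ ⊢
    constructor <;> linarith [le_abs_self (t₁ - t₂), neg_abs_le (t₁ - t₂)]
  have d₁₃ : |n₁ - n₃| ≤ |t₁ - t₃| + 2 := by
    rw [abs_le] at h₁ h₃ ⊢
    constructor <;> linarith [le_abs_self (t₁ - t₃), neg_abs_le (t₁ - t₃)]
  nlinarith [mul_le_mul_of_nonneg_left d₁₂ hε, mul_le_mul_of_nonneg_left d₁₃ hε]

noncomputable def decay (ε : ℝ) (m : ℤ) : ℝ≥0∞ := 2 ^ (-(ε * |(m : ℝ)|))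

lemma tsum_decay_ne_top {ε : ℝ} (hε : 0 < ε) : ∑' m, decay ε m ≠ ∞ := by
  have hr : (2 : ℝ) ^ (-ε) < 1 := Real.rpow_lt_one_of_one_lt_of_neg one_lt_two (neg_neg_of_pos hε)
  have hgeom := summable_geometric_of_lt_one (by positivity) hr
  have hsum : Summable fun m : ℤ => (2 : ℝ) ^ (-(ε * |(m : ℝ)|)) := by
    refine .of_nat_of_neg (hgeom.congr fun n => ?_) (hgeom.congr fun n => ?_) <;>
      rw [← Real.rpow_natCast, ← Real.rpow_mul two_pos.le] <;> simp
  have hdecay : ∀ m, decay ε m = ofReal ((2 : ℝ) ^ (-(ε * |(m : ℝ)|))) := fun m => by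
    rw [decay, ← ENNReal.ofReal_rpow_of_pos two_pos, ENNReal.ofReal_ofNat]
  simp only [hdecay, ← ENNReal.ofReal_tsum_of_nonneg (fun m => by positivity) hsum]
  exact ENNReal.ofReal_ne_top

lemma one_le_tsum_decay (ε : ℝ) : 1 ≤ ∑' m, decay ε m :=
  le_of_eq_of_le (by simp [decay]) (ENNReal.le_tsum 0)

lemma natCast_eq_two_rpow_logb {a : ℕ} (ha : a ≠ 0) : (a : ℝ≥0∞) = 2 ^ Real.logb 2 a := by
  rw [← ENNReal.ofReal_natCast, ← Real.rpow_logb (b := 2) (by norm_num) (by norm_num)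
    (by positivity : (0 : ℝ) < a), ← ENNReal.ofReal_rpow_of_pos (by norm_num)]
  simp

lemma abs_logb_sub_natLog_le_one (a : ℕ) : |Real.logb 2 a - Nat.log 2 a| ≤ 1 := by
  have h : ⌊Real.logb 2 a⌋ = Nat.log 2 a := by
    simpa using Real.floor_logb_natCast (b := 2) (Nat.cast_nonneg a)
  have h₁ := Int.floor_le (Real.logb 2 a)
  have h₂ := Int.lt_floor_add_one (Real.logb 2 a)
  rw [h, Int.cast_natCast] at h₁ h₂
  rw [abs_le]; constructor <;> linarith

-- `min_le_sub_mul_abs_sub` for `a_j = 2^(t_j)`; the factor `4 = 2^2` pays for replacing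
-- `t_j = logb 2 a_j` by `Nat.log 2 a_j`
lemma le_four_mul_rpow_mul_decay {u₁ u₂ u₃ ε : ℝ} (hu : u₁ + u₂ + u₃ = 2) (hε : 0 ≤ ε)
    (hε₁ : 2 * ε ≤ 1 - u₁) (hε₂ : 2 * ε ≤ 1 - u₂) (hε₃ : 2 * ε ≤ 1 - u₃) {a₁ a₂ a₃ : ℕ}
    {D : ℝ≥0∞} (h₁₂ : D ≤ a₁ * a₂) (h₁₃ : D ≤ a₁ * a₃) (h₂₃ : D ≤ a₂ * a₃) :
    D ≤ 4 * ((a₁ : ℝ≥0∞) ^ u₁ * (a₂ : ℝ≥0∞) ^ u₂ * (a₃ : ℝ≥0∞) ^ u₃) *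
      (decay ε (Nat.log 2 a₁ - Nat.log 2 a₂) * decay ε (Nat.log 2 a₁ - Nat.log 2 a₃)) := by
  rcases eq_or_ne a₁ 0 with rfl | ha₁
  · exact (h₁₂.trans (by simp)).trans zero_le
  rcases eq_or_ne a₂ 0 with rfl | ha₂
  · exact (h₁₂.trans (by simp)).trans zero_le
  rcases eq_or_ne a₃ 0 with rfl | ha₃
  · exact (h₁₃.trans (by simp)).trans zero_le
  set t₁ := Real.logb 2 a₁
  set t₂ := Real.logb 2 a₂
  set t₃ := Real.logb 2 a₃
  have e₁ : (a₁ : ℝ≥0∞) = 2 ^ t₁ := natCast_eq_two_rpow_logb ha₁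
  have e₂ : (a₂ : ℝ≥0∞) = 2 ^ t₂ := natCast_eq_two_rpow_logb ha₂
  have e₃ : (a₃ : ℝ≥0∞) = 2 ^ t₃ := natCast_eq_two_rpow_logb ha₃
  have two_rpow_add : ∀ x y : ℝ, (2 : ℝ≥0∞) ^ (x + y) = 2 ^ x * 2 ^ y :=
    fun x y => ENNReal.rpow_add x y two_ne_zero ENNReal.ofNat_ne_top
  set R := 2 + (u₁ * t₁ + u₂ * t₂ + u₃ * t₃) - ε * |(Nat.log 2 a₁ : ℝ) - Nat.log 2 a₂|
    - ε * |(Nat.log 2 a₁ : ℝ) - Nat.log 2 a₃|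
  have hR : (2 : ℝ≥0∞) ^ R = 4 * ((a₁ : ℝ≥0∞) ^ u₁ * (a₂ : ℝ≥0∞) ^ u₂ * (a₃ : ℝ≥0∞) ^ u₃) *
      (decay ε (Nat.log 2 a₁ - Nat.log 2 a₂) * decay ε (Nat.log 2 a₁ - Nat.log 2 a₃)) := by
    push_cast [R, decay, e₁, e₂, e₃, ← ENNReal.rpow_mul]
    simp only [sub_eq_add_neg, two_rpow_add]
    rw [show (2 : ℝ≥0∞) ^ (2 : ℝ) = 4 by norm_num]
    ring_nf
  have hmin : min (t₁ + t₂) (min (t₁ + t₃) (t₂ + t₃)) ≤ R :=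
    min_le_sub_mul_abs_sub hu hε hε₁ hε₂ hε₃ (abs_logb_sub_natLog_le_one a₁)
      (abs_logb_sub_natLog_le_one a₂) (abs_logb_sub_natLog_le_one a₃)
  have le_R : ∀ x y : ℝ, D ≤ 2 ^ x * 2 ^ y → x + y ≤ R → D ≤ 2 ^ R := fun x y hD hxy =>
    hD.trans ((two_rpow_add x y).symm.trans_le
      (ENNReal.rpow_le_rpow_of_exponent_le one_le_two hxy))
  rw [← hR]
  rcases min_le_iff.1 hmin with h | h
  · exact le_R _ _ (e₁ ▸ e₂ ▸ h₁₂) h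
  rcases min_le_iff.1 h with h | h
  · exact le_R _ _ (e₁ ▸ e₃ ▸ h₁₃) h
  · exact le_R _ _ (e₂ ▸ e₃ ▸ h₂₃) h

section Counting

lemma tsum_indicator_one {α : Type*} (E : Set α) :
    ∑' x, E.indicator (1 : α → ℝ≥0∞) x = E.encard := by
  rw [← tsum_subtype]
  exact ENNReal.tsum_set_one E

lemma tsum_tsum_indicator_mul_indicator_le {α β γ : Type*} (A : Set α) (B : Set γ)
    (φ : α → β → γ) (hφ : ∀ x, Function.Injective (φ x)) :
    ∑' (x) (y), A.indicator (1 : α → ℝ≥0∞) x * B.indicator 1 (φ x y) ≤ A.encard * B.encard := by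
  calc ∑' (x) (y), A.indicator (1 : α → ℝ≥0∞) x * B.indicator 1 (φ x y)
      = ∑' x, A.indicator 1 x * ∑' y, B.indicator 1 (φ x y) := by
        simp only [ENNReal.tsum_mul_left]
    _ ≤ ∑' x, A.indicator 1 x * (B.encard : ℝ≥0∞) := by
        refine ENNReal.tsum_le_tsum fun x => mul_le_mul_right ?_ _
        rw [← tsum_indicator_one]
        exact ENNReal.tsum_comp_le_tsum_of_injective (hφ x) _
    _ = A.encard * B.encard := by rw [ENNReal.tsum_mul_right, tsum_indicator_one]

variable {G : Type*} [AddGroup G]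

noncomputable def trilinearForm (g₁ g₂ g₃ : G → ℝ≥0∞) : ℝ≥0∞ :=
  ∑' q : G × G, g₁ q.1 * g₂ q.2 * g₃ (q.1 + q.2)

lemma trilinearForm_mono {g₁ g₂ g₃ h₁ h₂ h₃ : G → ℝ≥0∞} (hg₁ : g₁ ≤ h₁) (hg₂ : g₂ ≤ h₂)
    (hg₃ : g₃ ≤ h₃) : trilinearForm g₁ g₂ g₃ ≤ trilinearForm h₁ h₂ h₃ :=
  ENNReal.tsum_le_tsum fun _ => mul_le_mul' (mul_le_mul' (hg₁ _) (hg₂ _)) (hg₃ _)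

lemma toReal_trilinearForm_ofReal {f₁ f₂ f₃ : G → ℝ} (hf₁ : ∀ x, 0 ≤ f₁ x)
    (hf₂ : ∀ x, 0 ≤ f₂ x) (hf₃ : ∀ x, 0 ≤ f₃ x) :
    (trilinearForm (fun x => ofReal (f₁ x)) (fun x => ofReal (f₂ x))
      (fun x => ofReal (f₃ x))).toReal = ∑' q : G × G, f₁ q.1 * f₂ q.2 * f₃ (q.1 + q.2) := by
  rw [trilinearForm, ENNReal.tsum_toReal_eq fun q => by finiteness]
  refine tsum_congr fun q => ?_
  rw [← ENNReal.ofReal_mul (hf₁ _), ← ENNReal.ofReal_mul (by positivity [hf₁ q.1, hf₂ q.2]),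
    ENNReal.toReal_ofReal (by positivity [hf₁ q.1, hf₂ q.2, hf₃ (q.1 + q.2)])]

lemma trilinearForm_tsum_mul {ι : Type*} (c₁ c₂ c₃ : ι → ℝ≥0∞) (g₁ g₂ g₃ : ι → G → ℝ≥0∞) :
    trilinearForm (fun x => ∑' i, c₁ i * g₁ i x) (fun x => ∑' i, c₂ i * g₂ i x)
        (fun x => ∑' i, c₃ i * g₃ i x) =
      ∑' (i : ι) (j : ι) (k : ι), c₁ i * c₂ j * c₃ k * trilinearForm (g₁ i) (g₂ j) (g₃ k) := by
  have expand : ∀ a b c : ι → ℝ≥0∞,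
      (∑' i, a i) * (∑' j, b j) * (∑' k, c k) = ∑' (i) (j) (k), a i * b j * c k := by
    intro a b c
    simp only [ENNReal.tsum_mul_left, ENNReal.tsum_mul_right]
  simp only [trilinearForm, expand]
  simp only [← ENNReal.tsum_mul_left]
  rw [ENNReal.tsum_comm]
  refine tsum_congr fun i => ?_
  rw [ENNReal.tsum_comm]
  refine tsum_congr fun j => ?_
  rw [ENNReal.tsum_comm]
  exact tsum_congr fun k => tsum_congr fun q => by ring

-- any two of `x`, `y`, `x + y` determine the third
lemma trilinearForm_indicator_le (E₁ E₂ E₃ : Set G) :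
    trilinearForm (E₁.indicator 1) (E₂.indicator 1) (E₃.indicator 1) ≤ E₁.encard * E₂.encard ∧
    trilinearForm (E₁.indicator 1) (E₂.indicator 1) (E₃.indicator 1) ≤ E₁.encard * E₃.encard ∧
    trilinearForm (E₁.indicator 1) (E₂.indicator 1) (E₃.indicator 1) ≤ E₂.encard * E₃.encard := by
  have le_one : ∀ (E : Set G) x, E.indicator (1 : G → ℝ≥0∞) x ≤ 1 := fun E x =>
    Set.indicator_le_self E 1 x
  refine ⟨?_, ?_, ?_⟩ <;> rw [trilinearForm, ENNReal.tsum_prod']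
  · refine le_trans (ENNReal.tsum_le_tsum fun a => ENNReal.tsum_le_tsum fun b =>
      mul_le_of_le_one_right' (le_one _ _)) ?_
    exact tsum_tsum_indicator_mul_indicator_le E₁ E₂ (fun _ y => y) fun _ => Function.injective_id
  · refine le_trans (ENNReal.tsum_le_tsum fun a => ENNReal.tsum_le_tsum fun b =>
      mul_le_mul_left (mul_le_of_le_one_right' (le_one _ _)) _) ?_
    exact tsum_tsum_indicator_mul_indicator_le E₁ E₃ (· + ·) add_right_injective
  · rw [ENNReal.tsum_comm]
    refine le_trans (ENNReal.tsum_le_tsum fun b => ENNReal.tsum_le_tsum fun a =>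
      mul_le_mul_left (mul_le_of_le_one_left' (le_one _ _)) _) ?_
    exact tsum_tsum_indicator_mul_indicator_le E₂ E₃ (fun y x => x + y) add_left_injective

end Counting

lemma ofReal_two_zpow (k : ℤ) : ofReal ((2 : ℝ) ^ k) = (2 : ℝ≥0∞) ^ k := by
  rw [← ENNReal.ofReal_ofNat 2, ← Real.rpow_intCast, ← ENNReal.ofReal_rpow_of_pos two_pos,
    ENNReal.rpow_intCast]

section LevelSets

variable {G : Type*} {f : G → ℝ} {p : ℝ}

lemma eq_of_mem_levelSet {k k' : ℤ} {x : G} (h : x ∈ levelSet f k) (h' : x ∈ levelSet f k') :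
    k = k' := by
  have lt_succ : ∀ {i j : ℤ}, x ∈ levelSet f i → x ∈ levelSet f j → i < j + 1 := fun hi hj =>
    (zpow_lt_zpow_iff_right₀ one_lt_two).1 (hi.1.trans_lt hj.2)
  have := lt_succ h h'
  have := lt_succ h' h
  omega

lemma ofReal_le_tsum_levelSet {x : G} (hx : 0 ≤ f x) :
    ofReal (f x) ≤ ∑' k : ℤ, 2 ^ (k + 1) * (levelSet f k).indicator 1 x := by
  rcases hx.eq_or_lt with hx | hx
  · simp [← hx]
  obtain ⟨k, hk⟩ := exists_mem_Ico_zpow hx one_lt_two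
  calc ofReal (f x) ≤ 2 ^ (k + 1) := by
        rw [← ofReal_two_zpow]; exact ENNReal.ofReal_le_ofReal hk.2.le
    _ = 2 ^ (k + 1) * (levelSet f k).indicator 1 x := by
        rw [Set.indicator_of_mem (show x ∈ levelSet f k from hk)]; simp
    _ ≤ _ := ENNReal.le_tsum k

lemma tsum_indicator_levelSet_le (F : G → ℝ≥0∞) (x : G) :
    ∑' k, (levelSet f k).indicator F x ≤ F x := by
  by_cases hx : ∃ k, x ∈ levelSet f k
  · obtain ⟨k, hk⟩ := hx
    rw [tsum_eq_single k fun k' hk' =>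
      Set.indicator_of_notMem (fun h => hk' (eq_of_mem_levelSet h hk)) _]
    exact Set.indicator_le_self _ _ _
  · push Not at hx
    simp [Set.indicator_of_notMem (hx _)]

lemma levelSet_finite (hp : 0 < p) (hf : Summable fun x => |f x| ^ p) (k : ℤ) :
    (levelSet f k).Finite := by
  have hpos : (0 : ℝ) < ((2 : ℝ) ^ k) ^ p := by positivity
  refine (Filter.eventually_cofinite.1 (hf.tendsto_cofinite_zero.eventually_lt_const hpos)).subset
    fun x hx => not_lt.2 ?_
  exact Real.rpow_le_rpow (by positivity) (hx.1.trans (le_abs_self _)) hp.le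

lemma encard_levelSet (hp : 0 < p) (hf : Summable fun x => |f x| ^ p) (k : ℤ) :
    ((levelSet f k).encard : ℝ≥0∞) = Nat.card (levelSet f k) := by
  rw [Nat.card_coe_set_eq, ← (levelSet_finite hp hf k).cast_ncard_eq]
  rfl

noncomputable def levelMass (f : G → ℝ) (p : ℝ) (k : ℤ) : ℝ≥0∞ :=
  2 ^ k * (Nat.card (levelSet f k) : ℝ≥0∞) ^ (1 / p)

lemma pnormR_nonneg (f : G → ℝ) (p : ℝ) : 0 ≤ pnormR f p :=
  Real.rpow_nonneg (tsum_nonneg fun _ => by positivity) _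

lemma lorentzSup_nonneg (f : G → ℝ) (p : ℝ) : 0 ≤ lorentzSup f p :=
  Real.iSup_nonneg fun _ => by positivity

lemma ofReal_lorentzTerm (hp : 0 ≤ p) (k : ℤ) :
    ofReal ((2 : ℝ) ^ k * (Nat.card (levelSet f k) : ℝ) ^ (1 / p)) = levelMass f p k := by
  rw [ENNReal.ofReal_mul (by positivity), ofReal_two_zpow,
    ← ENNReal.ofReal_rpow_of_nonneg (Nat.cast_nonneg _) (by positivity), ENNReal.ofReal_natCast,
    levelMass]

lemma ofReal_pnormR_rpow (hp : 0 < p) (hf : Summable fun x => |f x| ^ p) :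
    ofReal (pnormR f p) ^ p = ∑' x, ofReal (|f x| ^ p) := by
  have hS : 0 ≤ ∑' x, |f x| ^ p := tsum_nonneg fun x => by positivity
  rw [pnormR, ENNReal.ofReal_rpow_of_nonneg (by positivity) hp.le, ← Real.rpow_mul hS,
    one_div_mul_cancel hp.ne', Real.rpow_one,
    ENNReal.ofReal_tsum_of_nonneg (fun x => by positivity) hf]

lemma levelMass_rpow_le (hp : 0 < p) (hf : Summable fun x => |f x| ^ p) (k : ℤ) :
    levelMass f p k ^ p ≤ ∑' x, (levelSet f k).indicator (fun x => ofReal (|f x| ^ p)) x := by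
  have hcard := encard_levelSet hp hf k
  calc levelMass f p k ^ p = ∑' x, (levelSet f k).indicator (fun _ => (2 ^ k) ^ p) x := by
        rw [levelMass, ENNReal.mul_rpow_of_nonneg _ _ hp.le, ← ENNReal.rpow_mul,
          one_div_mul_cancel hp.ne', ENNReal.rpow_one, ← hcard, ← tsum_indicator_one,
          ← ENNReal.tsum_mul_left]
        refine tsum_congr fun x => ?_
        by_cases hx : x ∈ levelSet f k <;> simp [hx]
    _ ≤ _ := by
        refine ENNReal.tsum_le_tsum fun x => ?_
        by_cases hx : x ∈ levelSet f k
        · rw [Set.indicator_of_mem hx, Set.indicator_of_mem hx, ← ofReal_two_zpow,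
            ENNReal.ofReal_rpow_of_nonneg (by positivity) hp.le]
          exact ENNReal.ofReal_le_ofReal
            (Real.rpow_le_rpow (by positivity) (hx.1.trans (le_abs_self _)) hp.le)
        · simp [Set.indicator_of_notMem hx]

lemma tsum_levelMass_rpow_le (hp : 0 < p) (hf : Summable fun x => |f x| ^ p) :
    ∑' k, levelMass f p k ^ p ≤ ofReal (pnormR f p) ^ p := by
  calc ∑' k, levelMass f p k ^ p
      ≤ ∑' k, ∑' x, (levelSet f k).indicator (fun x => ofReal (|f x| ^ p)) x :=
        ENNReal.tsum_le_tsum (levelMass_rpow_le hp hf)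
    _ ≤ ∑' x, ofReal (|f x| ^ p) := by
        rw [ENNReal.tsum_comm]
        exact ENNReal.tsum_le_tsum (tsum_indicator_levelSet_le _)
    _ = ofReal (pnormR f p) ^ p := (ofReal_pnormR_rpow hp hf).symm

lemma levelMass_le_lorentzSup (hp : 0 < p) (hf : Summable fun x => |f x| ^ p) (k : ℤ) :
    levelMass f p k ≤ ofReal (lorentzSup f p) := by
  have le_pnorm : ∀ k, levelMass f p k ≤ ofReal (pnormR f p) := fun k =>
    (ENNReal.rpow_le_rpow_iff hp).1 ((ENNReal.le_tsum k).trans (tsum_levelMass_rpow_le hp hf))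
  have hbdd : BddAbove (Set.range fun k : ℤ =>
      (2 : ℝ) ^ k * (Nat.card (levelSet f k) : ℝ) ^ (1 / p)) := by
    refine ⟨pnormR f p, ?_⟩
    rintro _ ⟨k, rfl⟩
    rw [← ENNReal.ofReal_le_ofReal_iff (pnormR_nonneg f p), ofReal_lorentzTerm hp.le]
    exact le_pnorm k
  rw [← ofReal_lorentzTerm hp.le]
  exact ENNReal.ofReal_le_ofReal (le_ciSup hbdd k)

end LevelSets

section Geometric

lemma tsum_indicator_Iic_two_zpow (κ : ℤ) :
    ∑' k, (Set.Iic κ).indicator (fun k => (2 : ℝ≥0∞) ^ k) k = 2 ^ (κ + 1) := by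
  have hinj : Function.Injective fun j : ℕ => κ - j := fun i j h => by simpa using h
  have hsupp : Function.support ((Set.Iic κ).indicator fun k => (2 : ℝ≥0∞) ^ k) ⊆
      Set.range fun j : ℕ => κ - j := fun k hk =>
    have hk : k ∈ Set.Iic κ := Set.support_indicator_subset hk
    ⟨(κ - k).toNat, by simp only [Set.mem_Iic] at hk ⊢; omega⟩
  rw [← hinj.tsum_eq hsupp]
  have term : ∀ j : ℕ, (Set.Iic κ).indicator (fun k => (2 : ℝ≥0∞) ^ k) (κ - j) =
      2 ^ κ * 2⁻¹ ^ j := fun j => by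
    rw [Set.indicator_of_mem (by simp), ENNReal.zpow_sub two_ne_zero ENNReal.ofNat_ne_top,
      zpow_natCast, ENNReal.inv_pow]
  simp only [term, ENNReal.tsum_mul_left, ENNReal.tsum_geometric, ENNReal.one_sub_inv_two, inv_inv,
    ENNReal.zpow_add two_ne_zero ENNReal.ofNat_ne_top, zpow_one]

lemma tsum_le_two_mul_of_le_two_zpow_mul {g : ℤ → ℝ≥0∞} {c X : ℝ≥0∞} (hc₀ : c ≠ 0)
    (hc : c ≠ ∞) (hg : ∀ k, g k ≤ 2 ^ k * c) (hX : ∀ k, g k ≠ 0 → 2 ^ k * c ≤ X) :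
    ∑' k, g k ≤ 2 * X := by
  by_cases h0 : ∀ k, g k = 0
  · simp [h0]
  push Not at h0
  obtain ⟨k₀, hk₀⟩ := h0
  rcases eq_or_ne X ∞ with rfl | hX_top
  · simp
  have iff_le : ∀ k : ℤ, 2 ^ k * c ≤ X ↔ (2 : ℝ) ^ k ≤ (X / c).toReal := fun k => by
    rw [← ENNReal.le_div_iff_mul_le (.inl hc₀) (.inl hc), ← ofReal_two_zpow,
      ENNReal.ofReal_le_iff_le_toReal (ENNReal.div_ne_top hX_top hc₀)]
  have hpos : 0 < (X / c).toReal := (zpow_pos two_pos k₀).trans_le ((iff_le k₀).1 (hX k₀ hk₀))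
  set κ := Int.log 2 (X / c).toReal
  calc ∑' k, g k ≤ ∑' k, (Set.Iic κ).indicator (fun k => (2 : ℝ≥0∞) ^ k) k * c := by
        refine ENNReal.tsum_le_tsum fun k => ?_
        rcases eq_or_ne (g k) 0 with hk | hk
        · simp [hk]
        have hkκ : k ≤ κ := (Int.zpow_le_iff_le_log one_lt_two hpos).1 (by
          exact_mod_cast (iff_le k).1 (hX k hk))
        rw [Set.indicator_of_mem (show k ∈ Set.Iic κ from hkκ)]
        exact hg k
    _ = 2 * (2 ^ κ * c) := by
        rw [ENNReal.tsum_mul_right, tsum_indicator_Iic_two_zpow,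
          ENNReal.zpow_add two_ne_zero ENNReal.ofNat_ne_top, zpow_one]
        ring
    _ ≤ 2 * X := by
        gcongr
        exact (iff_le κ).2 (by exact_mod_cast Int.zpow_log_le_self one_lt_two hpos)

end Geometric

section Fibers

variable {α β : Type*}

noncomputable def fiberSum (c : α → β) (h : α → ℝ≥0∞) (b : β) : ℝ≥0∞ :=
  ∑' a : c ⁻¹' {b}, h a

lemma tsum_fiberSum (c : α → β) (h : α → ℝ≥0∞) : ∑' b, fiberSum c h b = ∑' a, h a :=
  ENNReal.tsum_fiberwise h c

lemma tsum_mul_comp_eq_tsum_fiberSum_mul (c : α → β) (h : α → ℝ≥0∞) (g : β → ℝ≥0∞) :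
    ∑' a, h a * g (c a) = ∑' b, fiberSum c h b * g b := by
  rw [← ENNReal.tsum_fiberwise _ c]
  refine tsum_congr fun b => ?_
  rw [fiberSum, ← ENNReal.tsum_mul_right]
  exact tsum_congr fun a => by rw [show c a = b from a.2]

end Fibers

section SizeClasses

variable {G : Type*} {f : G → ℝ} {p : ℝ}

-- empty level sets share class `0` with singletons (`Nat.log 2 0 = 0`); their mass is `0`
noncomputable def sizeClass (f : G → ℝ) (k : ℤ) : ℤ := Nat.log 2 (Nat.card (levelSet f k))

lemma two_zpow_mul_le_levelMass {k : ℤ} (hp : 0 < p) (hk : levelMass f p k ≠ 0) :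
    2 ^ k * 2 ^ ((sizeClass f k : ℝ) * (1 / p)) ≤ levelMass f p k := by
  have hcard : Nat.card (levelSet f k) ≠ 0 := fun h => hk (by simp [levelMass, h, hp])
  rw [levelMass, sizeClass, Int.cast_natCast, ENNReal.rpow_mul, ENNReal.rpow_natCast]
  gcongr
  exact_mod_cast Nat.pow_log_le_self 2 hcard

lemma levelMass_le_two_zpow_mul (hp : 0 < p) (k : ℤ) :
    levelMass f p k ≤ 2 ^ k * 2 ^ (((sizeClass f k : ℝ) + 1) * (1 / p)) := by
  rw [levelMass, sizeClass, Int.cast_natCast, ← Nat.cast_succ, ENNReal.rpow_mul,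
    ENNReal.rpow_natCast]
  gcongr
  exact_mod_cast (Nat.lt_pow_succ_log_self one_lt_two _).le

-- `λ = λ^(1/2) λ^(1/2)`: one factor is bounded by the Lorentz norm, the other by the
-- `p`-th power mass of the size class
lemma levelMass_le_mul_fiberSum_rpow (hp : 0 < p) (hf : Summable fun x => |f x| ^ p) {k n : ℤ}
    (hk : sizeClass f k = n) :
    levelMass f p k ≤ ofReal (lorentzSup f p) ^ (1 / 2 : ℝ) *
      fiberSum (sizeClass f) (fun k => levelMass f p k ^ p) n ^ (1 / (2 * p)) := by
  calc levelMass f p k = levelMass f p k ^ (1 / 2 : ℝ) * (levelMass f p k ^ p) ^ (1 / (2 * p)) := by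
        rw [← ENNReal.rpow_mul, mul_one_div, div_mul_cancel_right₀ hp.ne',
          ← ENNReal.rpow_add_of_nonneg _ _ (by norm_num) (by norm_num)]
        norm_num
    _ ≤ _ := mul_le_mul'
        (ENNReal.rpow_le_rpow (levelMass_le_lorentzSup hp hf k) (by norm_num))
        (ENNReal.rpow_le_rpow (ENNReal.le_tsum
          (f := fun k : sizeClass f ⁻¹' {n} => levelMass f p k ^ p) ⟨k, hk⟩) (by positivity))

lemma fiberSum_levelMass_le (hp : 1 ≤ p) (hf : Summable fun x => |f x| ^ p) (n : ℤ) :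
    fiberSum (sizeClass f) (levelMass f p) n ≤ 4 * ofReal (lorentzSup f p) ^ (1 / 2 : ℝ) *
      fiberSum (sizeClass f) (fun k => levelMass f p k ^ p) n ^ (1 / (2 * p)) := by
  have hp₀ : 0 < p := zero_lt_one.trans_le hp
  set S := ofReal (lorentzSup f p) ^ (1 / 2 : ℝ) *
    fiberSum (sizeClass f) (fun k => levelMass f p k ^ p) n ^ (1 / (2 * p))
  have le_S : ∀ k, sizeClass f k = n → levelMass f p k ≤ S := fun k hk =>
    levelMass_le_mul_fiberSum_rpow hp₀ hf hk
  have two_rpow_le : (2 : ℝ≥0∞) ^ (1 / p) ≤ 2 := by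
    simpa using ENNReal.rpow_le_rpow_of_exponent_le one_le_two ((div_le_one hp₀).2 hp)
  -- on the class `n`, `2^k 2^(n/p) ≤ λ_k ≤ 2^(1/p) 2^k 2^(n/p)` for nonzero `λ_k`: a geometric sum
  rw [fiberSum, tsum_subtype]
  calc ∑' k, (sizeClass f ⁻¹' {n}).indicator (levelMass f p) k ≤ 2 * (2 ^ (1 / p) * S) := by
        refine tsum_le_two_mul_of_le_two_zpow_mul (c := 2 ^ (((n : ℝ) + 1) * (1 / p)))
          (by simp) (by simp) (fun k => ?_) (fun k hk => ?_)
        · by_cases hk : sizeClass f k = n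
          · rw [Set.indicator_of_mem (show k ∈ sizeClass f ⁻¹' {n} from hk), ← hk]
            exact levelMass_le_two_zpow_mul hp₀ k
          · rw [Set.indicator_of_notMem (show k ∉ sizeClass f ⁻¹' {n} from hk)]
            exact zero_le
        · have hmem : sizeClass f k = n := by
            by_contra h
            exact hk (Set.indicator_of_notMem (show k ∉ sizeClass f ⁻¹' {n} from h) _)
          rw [Set.indicator_of_mem (show k ∈ sizeClass f ⁻¹' {n} from hmem)] at hk
          calc 2 ^ k * 2 ^ (((n : ℝ) + 1) * (1 / p))
              = 2 ^ (1 / p) * (2 ^ k * 2 ^ ((sizeClass f k : ℝ) * (1 / p))) := by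
                rw [hmem, add_mul, one_mul,
                  ENNReal.rpow_add _ _ two_ne_zero ENNReal.ofNat_ne_top]
                ring
            _ ≤ 2 ^ (1 / p) * S := by
                gcongr
                exact (two_zpow_mul_le_levelMass hp₀ hk).trans (le_S k hmem)
    _ ≤ 4 * S := by
        rw [← mul_assoc]
        gcongr
        calc (2 : ℝ≥0∞) * 2 ^ (1 / p) ≤ 2 * 2 := by gcongr
          _ = 4 := by norm_num
    _ = _ := (mul_assoc _ _ _).symm

lemma tsum_fiberSum_levelMass_rpow_le (hp : 0 < p) (hf : Summable fun x => |f x| ^ p) :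
    (∑' n, fiberSum (sizeClass f) (fun k => levelMass f p k ^ p) n) ^ (1 / (2 * p)) ≤
      ofReal (pnormR f p) ^ (1 / 2 : ℝ) := by
  rw [tsum_fiberSum]
  calc _ ≤ (ofReal (pnormR f p) ^ p) ^ (1 / (2 * p)) :=
        ENNReal.rpow_le_rpow (tsum_levelMass_rpow_le hp hf) (by positivity)
    _ = _ := by rw [← ENNReal.rpow_mul]; congr 1; field_simp

end SizeClasses

section Convolution

noncomputable def conv (w g : ℤ → ℝ≥0∞) (n : ℤ) : ℝ≥0∞ := ∑' a, w a * g (n - a)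

lemma conv_le_mul_conv {w g g' : ℤ → ℝ≥0∞} {C : ℝ≥0∞} (h : ∀ n, g n ≤ C * g' n) (n : ℤ) :
    conv w g n ≤ C * conv w g' n := by
  rw [conv, conv, ← ENNReal.tsum_mul_left]
  exact ENNReal.tsum_le_tsum fun a => (mul_le_mul_right (h _) _).trans_eq (by ring)

lemma tsum_mul_comp_sub_eq_conv (c : ℤ → ℤ) (h w : ℤ → ℝ≥0∞) (m : ℤ) :
    ∑' k, h k * w (m - c k) = conv w (fiberSum c h) m := by
  rw [tsum_mul_comp_eq_tsum_fiberSum_mul c h fun n => w (m - n), conv,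
    ← (Equiv.subLeft m).tsum_eq]
  exact tsum_congr fun a => by simp [mul_comm]

lemma tsum_tsum_tsum_mul_eq_tsum_conv (c₁ c₂ c₃ : ℤ → ℤ) (h₁ h₂ h₃ w : ℤ → ℝ≥0∞) :
    ∑' (k₁) (k₂) (k₃), h₁ k₁ * (h₂ k₂ * w (c₁ k₁ - c₂ k₂)) * (h₃ k₃ * w (c₁ k₁ - c₃ k₃)) =
      ∑' n, fiberSum c₁ h₁ n * conv w (fiberSum c₂ h₂) n * conv w (fiberSum c₃ h₃) n := by
  calc _ = ∑' k₁, h₁ k₁ * (conv w (fiberSum c₂ h₂) (c₁ k₁) * conv w (fiberSum c₃ h₃) (c₁ k₁)) := by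
        refine tsum_congr fun k₁ => ?_
        simp only [← tsum_mul_comp_sub_eq_conv, ENNReal.tsum_mul_left, ENNReal.tsum_mul_right]
        ring
    _ = _ := by
        rw [tsum_mul_comp_eq_tsum_fiberSum_mul c₁ h₁
          fun n => conv w (fiberSum c₂ h₂) n * conv w (fiberSum c₃ h₃) n]
        simp only [mul_assoc]

lemma tsum_rpow_mul_rpow_mul_rpow_le {X : Type*} (F₁ F₂ F₃ : X → ℝ≥0∞) {s₁ s₂ s₃ : ℝ}
    (hs₁ : 0 ≤ s₁) (hs₂ : 0 ≤ s₂) (hs₃ : 0 ≤ s₃) (hs : s₁ + s₂ + s₃ = 1) :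
    ∑' x, F₁ x ^ s₁ * F₂ x ^ s₂ * F₃ x ^ s₃ ≤
      (∑' x, F₁ x) ^ s₁ * (∑' x, F₂ x) ^ s₂ * (∑' x, F₃ x) ^ s₃ := by
  let _ : MeasurableSpace X := ⊤
  have : DiscreteMeasurableSpace X := ⟨fun _ => trivial⟩
  have H := ENNReal.lintegral_prod_norm_pow_le (μ := MeasureTheory.Measure.count) Finset.univ
    (f := ![F₁, F₂, F₃]) (p := ![s₁, s₂, s₃]) (fun _ _ => Measurable.of_discrete.aemeasurable)
    (by simpa [Fin.sum_univ_three] using hs) (by simp [Fin.forall_fin_succ, hs₁, hs₂, hs₃])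
  simpa [MeasureTheory.lintegral_count, Fin.prod_univ_three] using H

lemma tsum_comp_sub_mul_eq (g w : ℤ → ℝ≥0∞) (σ : ℤ × ℤ → ℤ) :
    ∑' x : ℤ × ℤ × ℤ, g (x.1 - σ x.2) * (w x.2.1 * w x.2.2) = (∑' n, g n) * (∑' a, w a) ^ 2 := by
  have shift : ∀ c, ∑' n, g (n - c) = ∑' n, g n := fun c => (Equiv.subRight c).tsum_eq g
  rw [ENNReal.tsum_prod', ENNReal.tsum_comm]
  simp only [ENNReal.tsum_prod', ENNReal.tsum_mul_right, shift, ENNReal.tsum_mul_left, sq]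

lemma tsum_rpow_mul_conv_mul_conv_le (w g₁ g₂ g₃ : ℤ → ℝ≥0∞) {s₁ s₂ s₃ : ℝ}
    (hs₁ : 0 ≤ s₁) (hs₂ : 0 ≤ s₂) (hs₃ : 0 ≤ s₃) (hs : s₁ + s₂ + s₃ = 1) :
    ∑' n, g₁ n ^ s₁ * conv w (fun m => g₂ m ^ s₂) n * conv w (fun m => g₃ m ^ s₃) n ≤
      (∑' a, w a) ^ 2 * ((∑' n, g₁ n) ^ s₁ * (∑' n, g₂ n) ^ s₂ * (∑' n, g₃ n) ^ s₃) := by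
  have rpow_split : ∀ y : ℝ≥0∞, y ^ s₁ * y ^ s₂ * y ^ s₃ = y := fun y => by
    rw [← ENNReal.rpow_add_of_nonneg _ _ hs₁ hs₂,
      ← ENNReal.rpow_add_of_nonneg _ _ (add_nonneg hs₁ hs₂) hs₃, hs, ENNReal.rpow_one]
  set W : ℤ × ℤ → ℝ≥0∞ := fun y => w y.1 * w y.2
  -- Hölder on `ℤ³` for `F_j(n, a, b) = g_j(n - σ_j(a, b)) W(a, b)`; each `∑ F_j` factorises
  have split : ∀ x : ℤ × ℤ × ℤ,
      g₁ x.1 ^ s₁ * (w x.2.1 * g₂ (x.1 - x.2.1) ^ s₂) * (w x.2.2 * g₃ (x.1 - x.2.2) ^ s₃) =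
        (g₁ (x.1 - 0) * W x.2) ^ s₁ * (g₂ (x.1 - x.2.1) * W x.2) ^ s₂ *
          (g₃ (x.1 - x.2.2) * W x.2) ^ s₃ := fun x => by
    simp only [sub_zero, ENNReal.mul_rpow_of_nonneg _ _ hs₁, ENNReal.mul_rpow_of_nonneg _ _ hs₂,
      ENNReal.mul_rpow_of_nonneg _ _ hs₃]
    calc _ = g₁ x.1 ^ s₁ * g₂ (x.1 - x.2.1) ^ s₂ * g₃ (x.1 - x.2.2) ^ s₃ * W x.2 := by ring
      _ = g₁ x.1 ^ s₁ * g₂ (x.1 - x.2.1) ^ s₂ * g₃ (x.1 - x.2.2) ^ s₃ *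
          (W x.2 ^ s₁ * W x.2 ^ s₂ * W x.2 ^ s₃) := by rw [rpow_split]
      _ = _ := by ring
  calc _ = ∑' x : ℤ × ℤ × ℤ,
        g₁ x.1 ^ s₁ * (w x.2.1 * g₂ (x.1 - x.2.1) ^ s₂) * (w x.2.2 * g₃ (x.1 - x.2.2) ^ s₃) := by
        simp only [conv, ENNReal.tsum_prod', ENNReal.tsum_mul_left, ENNReal.tsum_mul_right]
    _ ≤ _ := by
        simp only [split]
        refine (tsum_rpow_mul_rpow_mul_rpow_le _ _ _ hs₁ hs₂ hs₃ hs).trans_eq ?_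
        rw [tsum_comp_sub_mul_eq g₁ w fun _ => 0, tsum_comp_sub_mul_eq g₂ w Prod.fst,
          tsum_comp_sub_mul_eq g₃ w Prod.snd]
        simp only [ENNReal.mul_rpow_of_nonneg _ _ hs₁, ENNReal.mul_rpow_of_nonneg _ _ hs₂,
          ENNReal.mul_rpow_of_nonneg _ _ hs₃]
        calc _ = (∑' n, g₁ n) ^ s₁ * (∑' n, g₂ n) ^ s₂ * (∑' n, g₃ n) ^ s₃ *
              (((∑' a, w a) ^ 2) ^ s₁ * ((∑' a, w a) ^ 2) ^ s₂ * ((∑' a, w a) ^ 2) ^ s₃) := by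
              ring
          _ = _ := by rw [rpow_split]; ring

end Convolution

section Main

variable {G : Type*} {f₁ f₂ f₃ : G → ℝ} {p₁ p₂ p₃ ε : ℝ}

lemma trilinearForm_ofReal_le_tsum_levelSet [AddGroup G] (hf₁ : ∀ x, 0 ≤ f₁ x)
    (hf₂ : ∀ x, 0 ≤ f₂ x) (hf₃ : ∀ x, 0 ≤ f₃ x) :
    trilinearForm (fun x => ofReal (f₁ x)) (fun x => ofReal (f₂ x)) (fun x => ofReal (f₃ x)) ≤
      ∑' (k₁ : ℤ) (k₂ : ℤ) (k₃ : ℤ), 2 ^ (k₁ + 1) * 2 ^ (k₂ + 1) * 2 ^ (k₃ + 1) *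
        trilinearForm ((levelSet f₁ k₁).indicator 1) ((levelSet f₂ k₂).indicator 1)
          ((levelSet f₃ k₃).indicator 1) := by
  rw [← trilinearForm_tsum_mul]
  exact trilinearForm_mono (fun x => ofReal_le_tsum_levelSet (hf₁ x))
    (fun x => ofReal_le_tsum_levelSet (hf₂ x)) (fun x => ofReal_le_tsum_levelSet (hf₃ x))

lemma trilinearForm_levelSet_le [AddGroup G] (hp₁ : 0 < p₁) (hp₂ : 0 < p₂) (hp₃ : 0 < p₃)
    (hsum : 1 / p₁ + 1 / p₂ + 1 / p₃ = 2) (hε : 0 ≤ ε) (hε₁ : 2 * ε ≤ 1 - 1 / p₁)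
    (hε₂ : 2 * ε ≤ 1 - 1 / p₂) (hε₃ : 2 * ε ≤ 1 - 1 / p₃)
    (hs₁ : Summable fun x => |f₁ x| ^ p₁) (hs₂ : Summable fun x => |f₂ x| ^ p₂)
    (hs₃ : Summable fun x => |f₃ x| ^ p₃) (k₁ k₂ k₃ : ℤ) :
    2 ^ (k₁ + 1) * 2 ^ (k₂ + 1) * 2 ^ (k₃ + 1) *
        trilinearForm ((levelSet f₁ k₁).indicator 1) ((levelSet f₂ k₂).indicator 1)
          ((levelSet f₃ k₃).indicator 1) ≤
      32 * (levelMass f₁ p₁ k₁ *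
        (levelMass f₂ p₂ k₂ * decay ε (sizeClass f₁ k₁ - sizeClass f₂ k₂)) *
        (levelMass f₃ p₃ k₃ * decay ε (sizeClass f₁ k₁ - sizeClass f₃ k₃))) := by
  obtain ⟨h₁₂, h₁₃, h₂₃⟩ :=
    trilinearForm_indicator_le (levelSet f₁ k₁) (levelSet f₂ k₂) (levelSet f₃ k₃)
  rw [encard_levelSet hp₁ hs₁, encard_levelSet hp₂ hs₂, encard_levelSet hp₃ hs₃] at *
  refine (mul_le_mul_right
    (le_four_mul_rpow_mul_decay hsum hε hε₁ hε₂ hε₃ h₁₂ h₁₃ h₂₃) _).trans_eq ?_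
  simp only [levelMass, sizeClass, ENNReal.zpow_add two_ne_zero ENNReal.ofNat_ne_top, zpow_one]
  ring

lemma trilinearForm_ofReal_le_tsum_fiberSum [AddGroup G] (hp₁ : 0 < p₁) (hp₂ : 0 < p₂)
    (hp₃ : 0 < p₃) (hsum : 1 / p₁ + 1 / p₂ + 1 / p₃ = 2) (hε : 0 ≤ ε) (hε₁ : 2 * ε ≤ 1 - 1 / p₁)
    (hε₂ : 2 * ε ≤ 1 - 1 / p₂) (hε₃ : 2 * ε ≤ 1 - 1 / p₃)
    (hf₁ : ∀ x, 0 ≤ f₁ x) (hf₂ : ∀ x, 0 ≤ f₂ x) (hf₃ : ∀ x, 0 ≤ f₃ x)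
    (hs₁ : Summable fun x => |f₁ x| ^ p₁) (hs₂ : Summable fun x => |f₂ x| ^ p₂)
    (hs₃ : Summable fun x => |f₃ x| ^ p₃) :
    trilinearForm (fun x => ofReal (f₁ x)) (fun x => ofReal (f₂ x)) (fun x => ofReal (f₃ x)) ≤
      32 * ∑' n, fiberSum (sizeClass f₁) (levelMass f₁ p₁) n *
        conv (decay ε) (fiberSum (sizeClass f₂) (levelMass f₂ p₂)) n *
        conv (decay ε) (fiberSum (sizeClass f₃) (levelMass f₃ p₃)) n := by
  refine (trilinearForm_ofReal_le_tsum_levelSet hf₁ hf₂ hf₃).trans ?_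
  rw [← tsum_tsum_tsum_mul_eq_tsum_conv]
  simp only [← ENNReal.tsum_mul_left]
  exact ENNReal.tsum_le_tsum fun k₁ => ENNReal.tsum_le_tsum fun k₂ => ENNReal.tsum_le_tsum fun k₃ =>
    trilinearForm_levelSet_le hp₁ hp₂ hp₃ hsum hε hε₁ hε₂ hε₃ hs₁ hs₂ hs₃ k₁ k₂ k₃

lemma tsum_fiberSum_mul_conv_le (w : ℤ → ℝ≥0∞) (hp₁ : 1 ≤ p₁) (hp₂ : 1 ≤ p₂) (hp₃ : 1 ≤ p₃)
    (hsum : 1 / p₁ + 1 / p₂ + 1 / p₃ = 2) (hs₁ : Summable fun x => |f₁ x| ^ p₁)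
    (hs₂ : Summable fun x => |f₂ x| ^ p₂) (hs₃ : Summable fun x => |f₃ x| ^ p₃) :
    ∑' n, fiberSum (sizeClass f₁) (levelMass f₁ p₁) n *
        conv w (fiberSum (sizeClass f₂) (levelMass f₂ p₂)) n *
        conv w (fiberSum (sizeClass f₃) (levelMass f₃ p₃)) n ≤
      64 * (∑' m, w m) ^ 2 *
        (ofReal (pnormR f₁ p₁) ^ (1 / 2 : ℝ) * ofReal (pnormR f₂ p₂) ^ (1 / 2 : ℝ) *
          ofReal (pnormR f₃ p₃) ^ (1 / 2 : ℝ)) *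
        (ofReal (lorentzSup f₁ p₁) ^ (1 / 2 : ℝ) * ofReal (lorentzSup f₂ p₂) ^ (1 / 2 : ℝ) *
          ofReal (lorentzSup f₃ p₃) ^ (1 / 2 : ℝ)) := by
  set M₁ := fiberSum (sizeClass f₁) (fun k => levelMass f₁ p₁ k ^ p₁)
  set M₂ := fiberSum (sizeClass f₂) (fun k => levelMass f₂ p₂ k ^ p₂)
  set M₃ := fiberSum (sizeClass f₃) (fun k => levelMass f₃ p₃ k ^ p₃)
  set A₁ := 4 * ofReal (lorentzSup f₁ p₁) ^ (1 / 2 : ℝ)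
  set A₂ := 4 * ofReal (lorentzSup f₂ p₂) ^ (1 / 2 : ℝ)
  set A₃ := 4 * ofReal (lorentzSup f₃ p₃) ^ (1 / 2 : ℝ)
  calc _ ≤ ∑' n, A₁ * M₁ n ^ (1 / (2 * p₁)) * (A₂ * conv w (fun m => M₂ m ^ (1 / (2 * p₂))) n) *
          (A₃ * conv w (fun m => M₃ m ^ (1 / (2 * p₃))) n) := by
        gcongr with n
        · exact fiberSum_levelMass_le hp₁ hs₁ n
        · exact conv_le_mul_conv (fun m => fiberSum_levelMass_le hp₂ hs₂ m) n
        · exact conv_le_mul_conv (fun m => fiberSum_levelMass_le hp₃ hs₃ m) n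
    _ = A₁ * A₂ * A₃ * ∑' n, M₁ n ^ (1 / (2 * p₁)) * conv w (fun m => M₂ m ^ (1 / (2 * p₂))) n *
          conv w (fun m => M₃ m ^ (1 / (2 * p₃))) n := by
        rw [← ENNReal.tsum_mul_left]
        exact tsum_congr fun n => by ring
    _ ≤ A₁ * A₂ * A₃ * ((∑' m, w m) ^ 2 * ((∑' n, M₁ n) ^ (1 / (2 * p₁)) *
          (∑' n, M₂ n) ^ (1 / (2 * p₂)) * (∑' n, M₃ n) ^ (1 / (2 * p₃)))) := by
        gcongr
        refine tsum_rpow_mul_conv_mul_conv_le w M₁ M₂ M₃ (by positivity) (by positivity)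
          (by positivity) ?_
        linear_combination hsum / 2
    _ ≤ A₁ * A₂ * A₃ * ((∑' m, w m) ^ 2 * (ofReal (pnormR f₁ p₁) ^ (1 / 2 : ℝ) *
          ofReal (pnormR f₂ p₂) ^ (1 / 2 : ℝ) * ofReal (pnormR f₃ p₃) ^ (1 / 2 : ℝ))) := by
        gcongr
        · exact tsum_fiberSum_levelMass_rpow_le (by positivity) hs₁
        · exact tsum_fiberSum_levelMass_rpow_le (by positivity) hs₂
        · exact tsum_fiberSum_levelMass_rpow_le (by positivity) hs₃
    _ = _ := by ring

lemma exists_pos_two_mul_le_one_sub_one_div (hp₁ : 1 < p₁) (hp₂ : 1 < p₂) (hp₃ : 1 < p₃) :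
    ∃ ε > 0, 2 * ε ≤ 1 - 1 / p₁ ∧ 2 * ε ≤ 1 - 1 / p₂ ∧ 2 * ε ≤ 1 - 1 / p₃ := by
  have room : ∀ {p : ℝ}, 1 < p → 0 < 1 - 1 / p := fun hp => by
    rw [sub_pos, div_lt_one (by linarith)]; exact hp
  refine ⟨min (min (1 - 1 / p₁) (1 - 1 / p₂)) (1 - 1 / p₃) / 2,
    by positivity [room hp₁, room hp₂, room hp₃], ?_⟩
  simp only [mul_div_cancel₀ _ (two_ne_zero' ℝ), min_le_iff, le_refl, true_or, or_true, and_self]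

lemma trilinearForm_ofReal_le [AddGroup G] (hp₁ : 1 ≤ p₁) (hp₂ : 1 ≤ p₂) (hp₃ : 1 ≤ p₃)
    (hsum : 1 / p₁ + 1 / p₂ + 1 / p₃ = 2) (hε : 0 ≤ ε) (hε₁ : 2 * ε ≤ 1 - 1 / p₁)
    (hε₂ : 2 * ε ≤ 1 - 1 / p₂) (hε₃ : 2 * ε ≤ 1 - 1 / p₃)
    (hf₁ : ∀ x, 0 ≤ f₁ x) (hf₂ : ∀ x, 0 ≤ f₂ x) (hf₃ : ∀ x, 0 ≤ f₃ x)
    (hs₁ : Summable fun x => |f₁ x| ^ p₁) (hs₂ : Summable fun x => |f₂ x| ^ p₂)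
    (hs₃ : Summable fun x => |f₃ x| ^ p₃) :
    trilinearForm (fun x => ofReal (f₁ x)) (fun x => ofReal (f₂ x)) (fun x => ofReal (f₃ x)) ≤
      2048 * (∑' m, decay ε m) ^ 2 *
        (ofReal (pnormR f₁ p₁) ^ (1 / 2 : ℝ) * ofReal (pnormR f₂ p₂) ^ (1 / 2 : ℝ) *
          ofReal (pnormR f₃ p₃) ^ (1 / 2 : ℝ)) *
        (ofReal (lorentzSup f₁ p₁) ^ (1 / 2 : ℝ) * ofReal (lorentzSup f₂ p₂) ^ (1 / 2 : ℝ) *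
          ofReal (lorentzSup f₃ p₃) ^ (1 / 2 : ℝ)) := by
  have hq : ∀ {p : ℝ}, 1 ≤ p → 0 < p := fun hp => zero_lt_one.trans_le hp
  refine (trilinearForm_ofReal_le_tsum_fiberSum (hq hp₁) (hq hp₂) (hq hp₃) hsum hε hε₁ hε₂ hε₃
    hf₁ hf₂ hf₃ hs₁ hs₂ hs₃).trans ?_
  refine (mul_le_mul_right (tsum_fiberSum_mul_conv_le _ hp₁ hp₂ hp₃ hsum hs₁ hs₂ hs₃) _).trans_eq ?_
  ring

end Main

end YoungLorentz

open YoungLorentz in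
theorem young_lorentz_bound (p1 p2 p3 : ℝ)
    (hp1 : 1 < p1) (hp2 : 1 < p2) (hp3 : 1 < p3)
    (hsum : 1 / p1 + 1 / p2 + 1 / p3 = 2) :
    ∃ η ∈ Set.Ioo (0 : ℝ) 1, ∃ C : ℝ, 0 < C ∧
      ∀ (G : Type) [AddGroup G], ∀ f1 f2 f3 : G → ℝ,
        (∀ x, 0 ≤ f1 x) → (∀ x, 0 ≤ f2 x) → (∀ x, 0 ≤ f3 x) →
        Summable (fun x => |f1 x| ^ p1) →
        Summable (fun x => |f2 x| ^ p2) →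
        Summable (fun x => |f3 x| ^ p3) →
        (∑' q : G × G, f1 q.1 * f2 q.2 * f3 (q.1 + q.2)) ≤
          C * (pnormR f1 p1 ^ (1 - η) * pnormR f2 p2 ^ (1 - η) * pnormR f3 p3 ^ (1 - η)) *
            (lorentzSup f1 p1 ^ η * lorentzSup f2 p2 ^ η * lorentzSup f3 p3 ^ η) := by
  obtain ⟨ε, hε, hε₁, hε₂, hε₃⟩ := exists_pos_two_mul_le_one_sub_one_div hp1 hp2 hp3
  set K := 2048 * (∑' m, decay ε m) ^ 2 with hK_def
  have hK : K ≠ ∞ := by finiteness [tsum_decay_ne_top hε]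
  have hK₀ : K ≠ 0 := by
    simpa [K] using (one_pos.trans_le (one_le_tsum_decay ε)).ne'
  refine ⟨1 / 2, by norm_num, K.toReal, ENNReal.toReal_pos hK₀ hK, ?_⟩
  intro G _ f₁ f₂ f₃ hf₁ hf₂ hf₃ hs₁ hs₂ hs₃
  have core := trilinearForm_ofReal_le hp1.le hp2.le hp3.le hsum hε.le hε₁ hε₂ hε₃
    hf₁ hf₂ hf₃ hs₁ hs₂ hs₃
  rw [← hK_def] at core
  rw [← toReal_trilinearForm_ofReal hf₁ hf₂ hf₃]
  refine (ENNReal.toReal_mono (by finiteness) core).trans_eq ?_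
  simp only [ENNReal.toReal_mul, ← ENNReal.toReal_rpow, ENNReal.toReal_ofReal (pnormR_nonneg _ _),
    ENNReal.toReal_ofReal (lorentzSup_nonneg _ _)]
  norm_num
end

section
/- Let p1, p2, p3 ∈ (1,∞) satisfy 1/p1 + 1/p2 + 1/p3 = 2, and let G be any discrete group. Set q = p3/(p3−1), r1 = (q−p1)p3/q, r2 = (q−p2)p3/q, s1 = p1/r1, s2 = p2/r2. Then s1, s2 ∈ (1,∞) and 1/s1 + 1/s2 = 1, and there exists a constant C < ∞, depending only on (p1,p2,p3), such that for every δ ∈ [0,1]: if nonzero functions f_j ∈ ℓ^{p_j}(G) satisfy |∑_{x,y∈G} f1(x)f2(y)f3(x+y)| ≥ (1−δ)‖f1‖_{p1}‖f2‖_{p2}‖f3‖_{p3}, then the functions g1 = |f1|^{r1} ∈ ℓ^{s1}(G), g2 = |f2|^{r2} ∈ ℓ^{s2}(G), g3 = |f3|^{p3} ∈ ℓ^1(G) satisfy ∑_{x,y∈G} g1(x)g2(y)g3(x+y) ≥ (1−Cδ)‖g1‖_{s1}‖g2‖_{s2}‖g3‖_1. -/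
/-- The ℓ^p norm of a complex function on a discrete group. -/
noncomputable def pnorm {G : Type*} (f : G → ℂ) (p : ℝ) : ℝ :=
  (∑' x, ‖f x‖ ^ p) ^ (1 / p)

/-!
Write `a = |f₁|`, `b = |f₂|`, `c = |f₃|` and `Λ(a, b, c) = ∑ a(x) b(y) c(x + y)`. Pointwise
`a b c = (a^p₁ b^p₂)^(1/q) · (a^r₁ b^r₂ c^p₃)^(1/p₃)`, so Hölder's inequality on `G × G` for the
conjugate pair `(q, p₃)` gives `Λ(a, b, c) ≤ (‖f₁‖_p₁^p₁ ‖f₂‖_p₂^p₂)^(1/q) · Λ(g₁, g₂, g₃)^(1/p₃)`.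
Since `1/pⱼ = 1/q + 1/(sⱼ p₃)`, the product `‖f₁‖_p₁ ‖f₂‖_p₂ ‖f₃‖_p₃` factors as
`(‖f₁‖_p₁^p₁ ‖f₂‖_p₂^p₂)^(1/q) · (‖g₁‖_s₁ ‖g₂‖_s₂ ‖g₃‖₁)^(1/p₃)`, so near-extremality of
`(f₁, f₂, f₃)` forces `Λ(g₁, g₂, g₃) ≥ (1 - δ)^p₃ ‖g₁‖_s₁ ‖g₂‖_s₂ ‖g₃‖₁`, and Bernoulli's
inequality gives `C = p₃`. Young's inequality for the exponents `(s₁, s₂, 1)`, which is Hölder for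
`(s₁, s₂)` after splitting `g₃`, shows that `Λ(g₁, g₂, g₃)` is finite.

The sums are taken in `ℝ≥0∞`, where they always exist; summability only enters when passing back
to the real sums of the statement.
-/

open MeasureTheory ENNReal

namespace ENNReal

theorem inner_le_Lp_mul_Lq_tsum {ι : Type*} (f g : ι → ℝ≥0∞) {p q : ℝ}
    (hpq : p.HolderConjugate q) :
    ∑' i, f i * g i ≤ (∑' i, f i ^ p) ^ (1 / p) * (∑' i, g i ^ q) ^ (1 / q) := by
  let _ : MeasurableSpace ι := ⊤
  have : MeasurableSingletonClass ι := ⟨fun _ => trivial⟩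
  simpa only [Pi.mul_apply, lintegral_count] using
    lintegral_mul_le_Lp_mul_Lq (Measure.count : Measure ι) hpq measurable_from_top.aemeasurable
      measurable_from_top.aemeasurable

theorem rpow_self_rpow_inv {y : ℝ} (hy : y ≠ 0) (x : ℝ≥0∞) : (x ^ (1 / y)) ^ y = x := by
  rw [← rpow_mul, one_div_mul_cancel hy, rpow_one]

theorem rpow_mul_rpow_of_add_eq_one (x : ℝ≥0∞) {α β : ℝ} (hα : 0 ≤ α) (hβ : 0 ≤ β)
    (h : α + β = 1) : x ^ α * x ^ β = x := by
  rw [← rpow_add_of_nonneg α β hα hβ, h, rpow_one]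

theorem tsum_mul_tsum {α β : Type*} (f : α → ℝ≥0∞) (g : β → ℝ≥0∞) :
    (∑' x, f x) * ∑' y, g y = ∑' z : α × β, f z.1 * g z.2 := by
  simp only [ENNReal.tsum_prod', ENNReal.tsum_mul_left, ENNReal.tsum_mul_right]

variable {G : Type*} [AddGroup G]

theorem tsum_mul_comp_add_fst (h k : G → ℝ≥0∞) :
    ∑' z : G × G, h z.1 * k (z.1 + z.2) = (∑' x, h x) * ∑' x, k x := by
  rw [tsum_mul_tsum]
  exact (Equiv.prodShear (Equiv.refl G) Equiv.addLeft).tsum_eq fun z => h z.1 * k z.2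

theorem tsum_mul_comp_add_snd (h k : G → ℝ≥0∞) :
    ∑' z : G × G, h z.2 * k (z.1 + z.2) = (∑' x, h x) * ∑' x, k x := by
  rw [tsum_mul_tsum]
  exact ((Equiv.prodComm G G).trans (Equiv.prodShear (Equiv.refl G) Equiv.addRight)).tsum_eq
    fun z => h z.1 * k z.2

end ENNReal

section YoungForm

variable {G : Type*} [AddGroup G]

noncomputable def youngForm (a b c : G → ℝ≥0∞) : ℝ≥0∞ :=
  ∑' z : G × G, a z.1 * b z.2 * c (z.1 + z.2)

theorem youngForm_le {s s' : ℝ} (hs : s.HolderConjugate s') (u v w : G → ℝ≥0∞) :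
    youngForm u v w ≤ (∑' x, u x ^ s) ^ (1 / s) * (∑' x, v x ^ s') ^ (1 / s') * ∑' x, w x := by
  have hs₀ : 0 ≤ 1 / s := one_div_nonneg.2 hs.nonneg
  have hs₀' : 0 ≤ 1 / s' := one_div_nonneg.2 hs.symm.nonneg
  have hsum : 1 / s + 1 / s' = 1 := by simpa only [one_div] using hs.inv_add_inv_eq_one
  have split : ∀ z : G × G, u z.1 * v z.2 * w (z.1 + z.2) =
      (u z.1 * w (z.1 + z.2) ^ (1 / s)) * (v z.2 * w (z.1 + z.2) ^ (1 / s')) := fun z => by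
    rw [mul_mul_mul_comm, rpow_mul_rpow_of_add_eq_one _ hs₀ hs₀' hsum, mul_comm (u _) (v _)]
  calc youngForm u v w
      = ∑' z : G × G, (u z.1 * w (z.1 + z.2) ^ (1 / s)) * (v z.2 * w (z.1 + z.2) ^ (1 / s')) :=
        tsum_congr split
    _ ≤ (∑' z : G × G, (u z.1 * w (z.1 + z.2) ^ (1 / s)) ^ s) ^ (1 / s) *
          (∑' z : G × G, (v z.2 * w (z.1 + z.2) ^ (1 / s')) ^ s') ^ (1 / s') :=
        inner_le_Lp_mul_Lq_tsum _ _ hs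
    _ = ((∑' x, u x ^ s) * ∑' x, w x) ^ (1 / s) * ((∑' x, v x ^ s') * ∑' x, w x) ^ (1 / s') := by
        simp only [mul_rpow_of_nonneg _ _ hs.nonneg, mul_rpow_of_nonneg _ _ hs.symm.nonneg,
          rpow_self_rpow_inv hs.ne_zero, rpow_self_rpow_inv hs.symm.ne_zero]
        rw [tsum_mul_comp_add_fst (fun x => u x ^ s), tsum_mul_comp_add_snd (fun x => v x ^ s')]
    _ = _ := by
        rw [mul_rpow_of_nonneg _ _ hs₀, mul_rpow_of_nonneg _ _ hs₀', mul_mul_mul_comm,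
          rpow_mul_rpow_of_add_eq_one _ hs₀ hs₀' hsum]

theorem youngForm_le_holder {p q p₁ p₂ r₁ r₂ : ℝ} (hpq : q.HolderConjugate p)
    (hp₁ : 0 ≤ p₁) (hp₂ : 0 ≤ p₂) (hr₁ : 0 ≤ r₁) (hr₂ : 0 ≤ r₂)
    (h₁ : p₁ / q + r₁ / p = 1) (h₂ : p₂ / q + r₂ / p = 1) (a b c : G → ℝ≥0∞) :
    youngForm a b c ≤ ((∑' x, a x ^ p₁) * ∑' x, b x ^ p₂) ^ (1 / q) *
      youngForm (fun x => a x ^ r₁) (fun x => b x ^ r₂) (fun x => c x ^ p) ^ (1 / p) := by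
  have split : ∀ z : G × G, a z.1 * b z.2 * c (z.1 + z.2) =
      (a z.1 ^ p₁ * b z.2 ^ p₂) ^ (1 / q) *
        (a z.1 ^ r₁ * b z.2 ^ r₂ * c (z.1 + z.2) ^ p) ^ (1 / p) := fun z => by
    simp only [mul_rpow_of_nonneg _ _ (one_div_nonneg.2 hpq.nonneg),
      mul_rpow_of_nonneg _ _ (one_div_nonneg.2 hpq.symm.nonneg), ← rpow_mul, mul_one_div,
      div_self hpq.symm.ne_zero, rpow_one]
    conv_lhs =>
      rw [← rpow_mul_rpow_of_add_eq_one (a z.1) (div_nonneg hp₁ hpq.nonneg)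
        (div_nonneg hr₁ hpq.symm.nonneg) h₁, ← rpow_mul_rpow_of_add_eq_one (b z.2)
        (div_nonneg hp₂ hpq.nonneg) (div_nonneg hr₂ hpq.symm.nonneg) h₂]
    ring
  calc youngForm a b c
      = ∑' z : G × G, (a z.1 ^ p₁ * b z.2 ^ p₂) ^ (1 / q) *
          (a z.1 ^ r₁ * b z.2 ^ r₂ * c (z.1 + z.2) ^ p) ^ (1 / p) := tsum_congr split
    _ ≤ _ := inner_le_Lp_mul_Lq_tsum _ _ hpq
    _ = _ := by
        simp only [rpow_self_rpow_inv hpq.ne_zero, rpow_self_rpow_inv hpq.symm.ne_zero,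
          ENNReal.tsum_mul_tsum]
        rfl

end YoungForm

section Norms

variable {ι E : Type*} [NormedAddCommGroup E]

theorem ofReal_tsum_norm_rpow {f : ι → E} {p : ℝ} (hp : 0 ≤ p)
    (hf : Summable fun x => ‖f x‖ ^ p) :
    ENNReal.ofReal (∑' x, ‖f x‖ ^ p) = ∑' x, ‖f x‖ₑ ^ p := by
  rw [ENNReal.ofReal_tsum_of_nonneg (fun _ => by positivity) hf]
  exact tsum_congr fun x => by rw [← ENNReal.ofReal_rpow_of_nonneg (norm_nonneg _) hp, ofReal_norm]

theorem tsum_enorm_rpow_ne_top {f : ι → E} {p : ℝ} (hp : 0 ≤ p)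
    (hf : Summable fun x => ‖f x‖ ^ p) : ∑' x, ‖f x‖ₑ ^ p ≠ ⊤ := by
  rw [← ofReal_tsum_norm_rpow hp hf]
  exact ofReal_ne_top

theorem tsum_norm_rpow_pos {f : ι → E} {p : ℝ} (hf : f ≠ 0)
    (hsum : Summable fun x => ‖f x‖ ^ p) : 0 < ∑' x, ‖f x‖ ^ p := by
  obtain ⟨x, hx⟩ := Function.ne_iff.mp hf
  exact hsum.tsum_pos (fun _ => by positivity) x (Real.rpow_pos_of_pos (norm_pos_iff.2 hx) p)

theorem pnormR_norm_rpow {f : ι → E} {r s p : ℝ} (hrs : r * s = p) :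
    pnormR (fun x => ‖f x‖ ^ r) s = (∑' x, ‖f x‖ ^ p) ^ (1 / s) := by
  simp_rw [pnormR, abs_of_nonneg (Real.rpow_nonneg (norm_nonneg _) _),
    ← Real.rpow_mul (norm_nonneg _), hrs]

variable {G : Type*} [AddGroup G]

theorem toReal_youngForm_enorm_rpow (f₁ f₂ f₃ : G → E) {r₁ r₂ p : ℝ} (hr₁ : 0 ≤ r₁)
    (hr₂ : 0 ≤ r₂) (hp : 0 ≤ p) :
    (youngForm (fun x => ‖f₁ x‖ₑ ^ r₁) (fun x => ‖f₂ x‖ₑ ^ r₂) (fun x => ‖f₃ x‖ₑ ^ p)).toReal =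
      ∑' z : G × G, ‖f₁ z.1‖ ^ r₁ * ‖f₂ z.2‖ ^ r₂ * ‖f₃ (z.1 + z.2)‖ ^ p := by
  rw [youngForm, ENNReal.tsum_toReal_eq fun z => mul_ne_top (mul_ne_top
    (rpow_ne_top_of_nonneg hr₁ enorm_ne_top) (rpow_ne_top_of_nonneg hr₂ enorm_ne_top))
    (rpow_ne_top_of_nonneg hp enorm_ne_top)]
  simp only [toReal_mul, ← toReal_rpow, toReal_enorm]

theorem youngForm_enorm_rpow_ne_top {s₁ s₂ r₁ r₂ p₁ p₂ p : ℝ} (hs : s₁.HolderConjugate s₂)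
    (hrs₁ : r₁ * s₁ = p₁) (hrs₂ : r₂ * s₂ = p₂) (hp₁ : 0 ≤ p₁) (hp₂ : 0 ≤ p₂) (hp : 0 ≤ p)
    {f₁ f₂ f₃ : G → E} (h₁ : Summable fun x => ‖f₁ x‖ ^ p₁)
    (h₂ : Summable fun x => ‖f₂ x‖ ^ p₂) (h₃ : Summable fun x => ‖f₃ x‖ ^ p) :
    youngForm (fun x => ‖f₁ x‖ₑ ^ r₁) (fun x => ‖f₂ x‖ₑ ^ r₂) (fun x => ‖f₃ x‖ₑ ^ p) ≠ ⊤ := by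
  refine ne_top_of_le_ne_top ?_ (youngForm_le hs _ _ _)
  simp only [← rpow_mul, hrs₁, hrs₂]
  exact mul_ne_top (mul_ne_top
    (rpow_ne_top_of_nonneg (one_div_nonneg.2 hs.nonneg) (tsum_enorm_rpow_ne_top hp₁ h₁))
    (rpow_ne_top_of_nonneg (one_div_nonneg.2 hs.symm.nonneg) (tsum_enorm_rpow_ne_top hp₂ h₂)))
    (tsum_enorm_rpow_ne_top hp h₃)

theorem enorm_tsum_le_youngForm {𝕜 : Type*} [NormedDivisionRing 𝕜] (f₁ f₂ f₃ : G → 𝕜) :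
    ‖∑' z : G × G, f₁ z.1 * f₂ z.2 * f₃ (z.1 + z.2)‖ₑ ≤
      youngForm (fun x => ‖f₁ x‖ₑ) (fun x => ‖f₂ x‖ₑ) (fun x => ‖f₃ x‖ₑ) := by
  simpa only [youngForm, enorm_mul] using
    enorm_tsum_le_tsum_enorm (f := fun z : G × G => f₁ z.1 * f₂ z.2 * f₃ (z.1 + z.2))

theorem norm_tsum_le_holder {𝕜 : Type*} [NormedDivisionRing 𝕜] {p q p₁ p₂ r₁ r₂ : ℝ}
    (hpq : q.HolderConjugate p) (hp₁ : 0 ≤ p₁) (hp₂ : 0 ≤ p₂) (hr₁ : 0 ≤ r₁) (hr₂ : 0 ≤ r₂)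
    (hpr₁ : p₁ / q + r₁ / p = 1) (hpr₂ : p₂ / q + r₂ / p = 1) {f₁ f₂ f₃ : G → 𝕜}
    (h₁ : Summable fun x => ‖f₁ x‖ ^ p₁) (h₂ : Summable fun x => ‖f₂ x‖ ^ p₂)
    (hS : youngForm (fun x => ‖f₁ x‖ₑ ^ r₁) (fun x => ‖f₂ x‖ₑ ^ r₂) (fun x => ‖f₃ x‖ₑ ^ p) ≠ ⊤) :
    ‖∑' z : G × G, f₁ z.1 * f₂ z.2 * f₃ (z.1 + z.2)‖ ≤
      ((∑' x, ‖f₁ x‖ ^ p₁) * ∑' x, ‖f₂ x‖ ^ p₂) ^ (1 / q) *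
        (∑' z : G × G, ‖f₁ z.1‖ ^ r₁ * ‖f₂ z.2‖ ^ r₂ * ‖f₃ (z.1 + z.2)‖ ^ p) ^ (1 / p) := by
  have key := (enorm_tsum_le_youngForm f₁ f₂ f₃).trans
    (youngForm_le_holder hpq hp₁ hp₂ hr₁ hr₂ hpr₁ hpr₂ _ _ _)
  rw [← ofReal_tsum_norm_rpow hp₁ h₁, ← ofReal_tsum_norm_rpow hp₂ h₂] at key
  have := toReal_mono (mul_ne_top (rpow_ne_top_of_nonneg (one_div_nonneg.2 hpq.nonneg)
    (mul_ne_top ofReal_ne_top ofReal_ne_top))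
    (rpow_ne_top_of_nonneg (one_div_nonneg.2 hpq.symm.nonneg) hS)) key
  rwa [toReal_enorm, toReal_mul, ← toReal_rpow, ← toReal_rpow, toReal_mul,
    toReal_ofReal (tsum_nonneg fun _ => by positivity),
    toReal_ofReal (tsum_nonneg fun _ => by positivity),
    toReal_youngForm_enorm_rpow _ _ _ hr₁ hr₂ hpq.symm.nonneg] at this

end Norms

theorem young_reduction_exponents {p p' p₃ q r s : ℝ} (hp : 0 < p) (hp' : 1 < p')
    (hq : q.HolderConjugate p₃) (hsum : 1 / p + 1 / p' + 1 / p₃ = 2)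
    (hr : r = (q - p) * p₃ / q) (hs : s = p / r) :
    0 < r ∧ r * s = p ∧ p / q + r / p₃ = 1 ∧ 1 / p = 1 / q + 1 / s * (1 / p₃) ∧
      s⁻¹ = p₃ * (1 - 1 / p') := by
  have hq₀ := hq.pos
  have hp₃ := hq.symm.pos
  have hconj : 1 / q + 1 / p₃ = 1 := by simpa only [one_div] using hq.inv_add_inv_eq_one
  have hpq : p < q := by
    have : 1 / p' < 1 := (div_lt_one (by linarith)).2 hp'
    rw [← one_div_lt_one_div hq₀ hp]
    linarith
  have hr₀ : 0 < r := by rw [hr]; exact div_pos (mul_pos (by linarith) hp₃) hq₀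
  have hrp : r / p₃ = 1 - p / q := by rw [hr]; field_simp
  have hrp' : r / p = p₃ * (1 / p - 1 / q) := by rw [hr]; field_simp
  have hsinv : s⁻¹ = r / p := by rw [hs, inv_div]
  refine ⟨hr₀, by rw [hs]; field_simp, by linarith, ?_, ?_⟩
  · rw [one_div s, hsinv, hrp']
    field_simp
    ring
  · rw [hsinv, hrp', show 1 / q = 1 - 1 / p₃ by linarith,
      show 1 / p' = 2 - 1 / p - 1 / p₃ by linarith]
    field_simp
    ring

theorem young_reduction_holderConjugate {p₁ p₂ p₃ s₁ s₂ : ℝ} (hp₁ : 1 < p₁) (hp₂ : 1 < p₂)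
    (hp₃ : 0 < p₃) (hsum : 1 / p₁ + 1 / p₂ + 1 / p₃ = 2) (hs₁ : s₁⁻¹ = p₃ * (1 - 1 / p₂))
    (hs₂ : s₂⁻¹ = p₃ * (1 - 1 / p₁)) : s₁.HolderConjugate s₂ := by
  have h₁ : 1 / p₁ < 1 := (div_lt_one (by linarith)).2 hp₁
  have h₂ : 1 / p₂ < 1 := (div_lt_one (by linarith)).2 hp₂
  have h₃ : p₃ * (1 / p₃) = 1 := mul_one_div_cancel hp₃.ne'
  rw [← inv_inv s₁, ← inv_inv s₂, hs₁, hs₂]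
  exact .inv_inv (by nlinarith) (by nlinarith) (by linear_combination (-p₃) * hsum + h₃)

theorem one_sub_mul_le_of_one_sub_mul_le {p q p₁ p₂ s₁ s₂ A₁ A₂ A₃ S δ : ℝ} (hp : 1 ≤ p)
    (h₁ : 1 / p₁ = 1 / q + 1 / s₁ * (1 / p)) (h₂ : 1 / p₂ = 1 / q + 1 / s₂ * (1 / p))
    (hA₁ : 0 < A₁) (hA₂ : 0 < A₂) (hA₃ : 0 ≤ A₃) (hS : 0 ≤ S) (hδ : δ ≤ 1)
    (h : (1 - δ) * (A₁ ^ (1 / p₁) * A₂ ^ (1 / p₂) * A₃ ^ (1 / p)) ≤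
      (A₁ * A₂) ^ (1 / q) * S ^ (1 / p)) :
    (1 - p * δ) * (A₁ ^ (1 / s₁) * A₂ ^ (1 / s₂) * A₃) ≤ S := by
  set N := A₁ ^ (1 / s₁) * A₂ ^ (1 / s₂) * A₃
  have hN : 0 ≤ N := by positivity
  have factor :
      A₁ ^ (1 / p₁) * A₂ ^ (1 / p₂) * A₃ ^ (1 / p) = (A₁ * A₂) ^ (1 / q) * N ^ (1 / p) := by
    rw [Real.mul_rpow hA₁.le hA₂.le, Real.mul_rpow (by positivity) hA₃,
      Real.mul_rpow (by positivity) (by positivity), ← Real.rpow_mul hA₁.le,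
      ← Real.rpow_mul hA₂.le, h₁, h₂, Real.rpow_add hA₁, Real.rpow_add hA₂]
    ring
  rw [factor, mul_left_comm] at h
  have hroot : (1 - δ) * N ^ (1 / p) ≤ S ^ (1 / p) := le_of_mul_le_mul_left h (by positivity)
  have hpow : (1 - δ) ^ p * N ≤ S := by
    have := Real.rpow_le_rpow (by positivity) hroot (by positivity : 0 ≤ p)
    rwa [Real.mul_rpow (by linarith) (by positivity), ← Real.rpow_mul hN, ← Real.rpow_mul hS,
      one_div_mul_cancel (by positivity), Real.rpow_one, Real.rpow_one] at this
  have bernoulli : 1 - p * δ ≤ (1 - δ) ^ p := by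
    have := one_add_mul_self_le_rpow_one_add (s := -δ) (by linarith) hp
    rw [← sub_eq_add_neg] at this
    linarith
  exact (mul_le_mul_of_nonneg_right bernoulli hN).trans hpow

theorem young_reduction_to_L1 (p1 p2 p3 q r1 r2 s1 s2 : ℝ)
    (hp1 : 1 < p1) (hp2 : 1 < p2) (hp3 : 1 < p3)
    (hsum : 1 / p1 + 1 / p2 + 1 / p3 = 2)
    (hq : q = p3 / (p3 - 1))
    (hr1 : r1 = (q - p1) * p3 / q) (hr2 : r2 = (q - p2) * p3 / q)
    (hs1 : s1 = p1 / r1) (hs2 : s2 = p2 / r2) :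
    (1 < s1) ∧ (1 < s2) ∧ (1 / s1 + 1 / s2 = 1) ∧
    ∃ C : ℝ, 0 < C ∧
      ∀ (G : Type) [AddGroup G], ∀ δ ∈ Set.Icc (0 : ℝ) 1, ∀ f1 f2 f3 : G → ℂ,
        f1 ≠ 0 → f2 ≠ 0 → f3 ≠ 0 →
        Summable (fun x => ‖f1 x‖ ^ p1) →
        Summable (fun x => ‖f2 x‖ ^ p2) →
        Summable (fun x => ‖f3 x‖ ^ p3) →
        ‖∑' z : G × G, f1 z.1 * f2 z.2 * f3 (z.1 + z.2)‖ ≥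
          (1 - δ) * (pnorm f1 p1 * pnorm f2 p2 * pnorm f3 p3) →
        (∑' z : G × G, ‖f1 z.1‖ ^ r1 * ‖f2 z.2‖ ^ r2 * ‖f3 (z.1 + z.2)‖ ^ p3) ≥
          (1 - C * δ) *
            (pnormR (fun x => ‖f1 x‖ ^ r1) s1 * pnormR (fun x => ‖f2 x‖ ^ r2) s2 *
              pnormR (fun x => ‖f3 x‖ ^ p3) 1) := by
  have hq' : q.HolderConjugate p3 := ((Real.holderConjugate_iff_eq_conjExponent hp3).2 hq).symm
  obtain ⟨hr1₀, hrs1, hpr1, hps1, hs1inv⟩ :=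
    young_reduction_exponents (by linarith) hp2 hq' hsum hr1 hs1
  obtain ⟨hr2₀, hrs2, hpr2, hps2, hs2inv⟩ :=
    young_reduction_exponents (by linarith) hp1 hq' (by linarith) hr2 hs2
  have hs := young_reduction_holderConjugate hp1 hp2 (by linarith) hsum hs1inv hs2inv
  refine ⟨hs.lt, hs.symm.lt, by simpa only [one_div] using hs.inv_add_inv_eq_one, p3,
    by linarith, ?_⟩
  intro G _ δ ⟨_, hδ⟩ f1 f2 f3 hf1 hf2 _ h1 h2 h3 hT
  have hS := youngForm_enorm_rpow_ne_top hs hrs1 hrs2 (by linarith) (by linarith) (by linarith)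
    h1 h2 h3
  have hT' :=
    norm_tsum_le_holder hq' (by linarith) (by linarith) hr1₀.le hr2₀.le hpr1 hpr2 h1 h2 hS
  rw [pnormR_norm_rpow hrs1, pnormR_norm_rpow hrs2, pnormR_norm_rpow (mul_one p3), one_div_one,
    Real.rpow_one]
  exact one_sub_mul_le_of_one_sub_mul_le hp3.le hps1 hps2 (tsum_norm_rpow_pos hf1 h1)
    (tsum_norm_rpow_pos hf2 h2) (tsum_nonneg fun _ => by positivity)
    (tsum_nonneg fun _ => by positivity) hδ (hT.trans hT')
end

section
/- Let p ∈ (1,∞). There exist constants C > 0 and γ > 0, depending only on p, such that for any measure space, any f, g ∈ L^p, and any ε ∈ [0,1]: if ‖f+g‖_p^p ≥ (1−ε)(2^{p−1}‖f‖_p^p + 2^{p−1}‖g‖_p^p), then ‖f−g‖_p^p ≤ C ε^γ (‖f‖_p^p + ‖g‖_p^p). -/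
/-!
For `p ≥ 2` the pointwise Clarkson inequality `|a + b|^p + |a - b|^p ≤ 2^{p-1} (|a|^p + |b|^p)`
says `|a - b|^p ≤ D(a, b)`, where `D = 2^{p-1} (|a|^p + |b|^p) - |a + b|^p` is its defect, and the
hypothesis says exactly that `∫ D ≤ ε M` with `M = 2^{p-1} (‖f‖_p^p + ‖g‖_p^p)`; so `γ = 1`.

For `1 < p < 2` the defect only controls `|a - b|^2 (|a| + |b|)^{p-2}`. By the parallelogram law
`|a - b|^2 = (|a| - |b|)^2 + ((|a| + |b|)^2 - |a + b|^2)`; the first part is bounded by a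
two-point inequality for `t ↦ (1 + t)^p + (1 - t)^p`, the second by concavity of `u ↦ u^{p/2}`.
Raising to the power `p / 2` gives `|a - b|^p ≲ D^{p/2} S^{1-p/2}` with
`S = 2^{p-1} (|a|^p + |b|^p)`, and Hölder's inequality turns this into
`‖f - g‖_p^p ≲ (ε M)^{p/2} M^{1-p/2} = ε^{p/2} M`.
-/

open MeasureTheory

namespace Real

lemma rpow_add_le_mul_rpow_add_rpow {x y β : ℝ} (hx : 0 ≤ x) (hy : 0 ≤ y) (hβ : 1 ≤ β) :
    (x + y) ^ β ≤ 2 ^ (β - 1) * (x ^ β + y ^ β) := by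
  lift x to NNReal using hx
  lift y to NNReal using hy
  exact_mod_cast NNReal.rpow_add_le_mul_rpow_add_rpow x y hβ

lemma sq_rpow {x : ℝ} (hx : 0 ≤ x) (r : ℝ) : (x ^ 2) ^ r = x ^ (2 * r) := by
  exact_mod_cast (rpow_natCast_mul hx 2 r).symm

lemma two_add_mul_sq_le_one_add_rpow_add_one_sub_rpow {p t : ℝ} (hp1 : 1 < p) (hp2 : p ≤ 2)
    (ht : |t| ≤ 1) : 2 + (p - 1) ^ 2 / 2 * t ^ 2 ≤ (1 + t) ^ p + (1 - t) ^ p := by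
  wlog ht0 : 0 ≤ t generalizing t
  · have h := this (t := -t) (by rwa [abs_neg]) (by linarith)
    rw [neg_sq, sub_neg_eq_add, ← sub_eq_add_neg] at h
    linarith
  have ht1 : t ≤ 1 := (abs_le.mp ht).2
  -- Bernoulli for `2 - p ∈ [0, 1)` bounds `(1 + t) ^ p` below by `(1 + t) ^ 2 / (1 + (2 - p) t)`
  have hconc : (1 + t) ^ (2 - p) ≤ 1 + (2 - p) * t :=
    rpow_one_add_le_one_add_mul_self (by linarith) (by linarith) (by linarith)
  have hconv : 1 + p * -t ≤ (1 + -t) ^ p := one_add_mul_self_le_rpow_one_add (by linarith) hp1.le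
  have hsplit : (1 + t) ^ 2 = (1 + t) ^ p * (1 + t) ^ (2 - p) := by
    rw [← rpow_add (by linarith), add_sub_cancel, rpow_two]
  have hquad : (1 + (2 - p) * t) * (1 + p * t + (p - 1) ^ 2 / 2 * t ^ 2) ≤ (1 + t) ^ 2 := by
    nlinarith [mul_nonneg (mul_nonneg (sq_nonneg (p - 1)) (sq_nonneg t))
      (by nlinarith : (0 : ℝ) ≤ 1 - (2 - p) * t)]
  have hplus : 1 + p * t + (p - 1) ^ 2 / 2 * t ^ 2 ≤ (1 + t) ^ p := by
    refine le_of_mul_le_mul_left ?_ (by nlinarith : (0 : ℝ) < 1 + (2 - p) * t)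
    calc _ ≤ (1 + t) ^ 2 := hquad
      _ ≤ (1 + t) ^ p * (1 + (2 - p) * t) := by
        rw [hsplit]; gcongr
      _ = _ := mul_comm _ _
  rw [← sub_eq_add_neg] at hconv
  linarith

lemma mul_sq_sub_le_rpow_defect_mul_rpow {p x y : ℝ} (hp1 : 1 < p) (hp2 : p ≤ 2) (hx : 0 ≤ x)
    (hy : 0 ≤ y) :
    (p - 1) ^ 2 / 4 * (x - y) ^ 2 ≤
      (2 ^ (p - 1) * (x ^ p + y ^ p) - (x + y) ^ p) * (x + y) ^ (2 - p) := by
  obtain ⟨σ, t, hσ, ht, rfl, rfl⟩ :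
      ∃ σ t : ℝ, 0 ≤ σ ∧ |t| ≤ 1 ∧ x = σ * (1 + t) ∧ y = σ * (1 - t) := by
    refine ⟨(x + y) / 2, (x - y) / (x + y), by positivity, ?_, ?_, ?_⟩
    · rw [abs_div, abs_of_nonneg (by positivity : 0 ≤ x + y)]
      exact div_le_one_of_le₀ (abs_sub_le_iff.mpr ⟨by linarith, by linarith⟩) (by positivity)
    all_goals
      rcases (add_nonneg hx hy).eq_or_lt with h | h
      · have : x = 0 := by linarith
        have : y = 0 := by linarith
        subst_vars; simp
      · field_simp; ring
  have hF := two_add_mul_sq_le_one_add_rpow_add_one_sub_rpow hp1 hp2 ht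
  obtain ⟨ht₁, ht₂⟩ := abs_le.mp ht
  have hs : σ * (1 + t) + σ * (1 - t) = 2 * σ := by ring
  have h2 : (2 : ℝ) ^ p * 2 ^ (2 - p) = 4 := by
    rw [← rpow_add two_pos, add_sub_cancel]; norm_num
  have hσ2 : σ ^ p * σ ^ (2 - p) = σ ^ 2 := by
    rw [← rpow_add' hσ (by norm_num), add_sub_cancel, rpow_two]
  have h2p : (2 : ℝ) ^ (p - 1) = 2 ^ p / 2 := by rw [rpow_sub two_pos, rpow_one]
  rw [hs, mul_rpow hσ (by linarith), mul_rpow hσ (by linarith), mul_rpow two_pos.le hσ,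
    mul_rpow two_pos.le hσ, h2p]
  have key : (2 ^ p / 2 * (σ ^ p * (1 + t) ^ p + σ ^ p * (1 - t) ^ p) - 2 ^ p * σ ^ p) *
      (2 ^ (2 - p) * σ ^ (2 - p)) = 2 * σ ^ 2 * ((1 + t) ^ p + (1 - t) ^ p - 2) := by
    linear_combination ((1 + t) ^ p + (1 - t) ^ p - 2) *
      (σ ^ p * σ ^ (2 - p) * h2 + 4 * hσ2) / 2
  rw [key]
  nlinarith [mul_le_mul_of_nonneg_left hF (by positivity : (0 : ℝ) ≤ 2 * σ ^ 2)]

end Real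

section Pointwise

variable {E : Type*} [NormedAddCommGroup E]

noncomputable def clarksonDefect (p : ℝ) (a b : E) : ℝ :=
  2 ^ (p - 1) * (‖a‖ ^ p + ‖b‖ ^ p) - ‖a + b‖ ^ p

lemma clarksonDefect_nonneg {p : ℝ} (hp : 1 ≤ p) (a b : E) : 0 ≤ clarksonDefect p a b := by
  have htri : ‖a + b‖ ^ p ≤ (‖a‖ + ‖b‖) ^ p := by gcongr; exact norm_add_le a b
  have := Real.rpow_add_le_mul_rpow_add_rpow (norm_nonneg a) (norm_nonneg b) hp
  rw [clarksonDefect]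
  linarith

variable [InnerProductSpace ℝ E]

lemma sq_norm_add_add_sq_norm_sub (a b : E) :
    ‖a + b‖ ^ 2 + ‖a - b‖ ^ 2 = 2 * (‖a‖ ^ 2 + ‖b‖ ^ 2) := by
  simpa only [sq] using parallelogram_law_with_norm ℝ a b

lemma norm_sub_rpow_le_clarksonDefect {p : ℝ} (hp : 2 ≤ p) (a b : E) :
    ‖a - b‖ ^ p ≤ clarksonDefect p a b := by
  have hβ : 1 ≤ p / 2 := by linarith
  have hp2 : 2 * (p / 2) = p := by ring
  have h1 := Real.add_rpow_le_rpow_add (sq_nonneg ‖a + b‖) (sq_nonneg ‖a - b‖) hβ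
  have h2 := Real.rpow_add_le_mul_rpow_add_rpow (sq_nonneg ‖a‖) (sq_nonneg ‖b‖) hβ
  simp only [Real.sq_rpow (norm_nonneg _), hp2] at h1 h2
  have h3 : (2 : ℝ) ^ (p / 2) * 2 ^ (p / 2 - 1) = 2 ^ (p - 1) := by
    rw [← Real.rpow_add two_pos]
    ring_nf
  rw [sq_norm_add_add_sq_norm_sub, Real.mul_rpow two_pos.le (by positivity)] at h1
  rw [clarksonDefect, ← h3, mul_assoc]
  calc _ ≤ 2 ^ (p / 2) * (‖a‖ ^ 2 + ‖b‖ ^ 2) ^ (p / 2) - ‖a + b‖ ^ p := by linarith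
    _ ≤ _ := by gcongr

lemma sq_norm_sub_le_clarksonDefect_mul {p : ℝ} (hp1 : 1 < p) (hp2 : p ≤ 2) (a b : E) :
    (p - 1) ^ 2 / 4 * ‖a - b‖ ^ 2 ≤ clarksonDefect p a b * (‖a‖ + ‖b‖) ^ (2 - p) := by
  set s := ‖a‖ + ‖b‖
  set w := ‖a + b‖
  have hs : 0 ≤ s := by positivity
  have hws : w ≤ s := norm_add_le a b
  have hradial := Real.mul_sq_sub_le_rpow_defect_mul_rpow hp1 hp2 (norm_nonneg a) (norm_nonneg b)
  -- the tangent line of the concave `u ↦ u ^ (p / 2)` at `s ^ 2`, in the form of weighted AM-GM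
  have hamgm := Real.geom_mean_le_arith_mean2_weighted (by linarith) (by linarith)
    (sq_nonneg w) (sq_nonneg s) (add_sub_cancel (p / 2) 1)
  have hp : 2 * (p / 2) = p := by ring
  have hp' : 2 * (1 - p / 2) = 2 - p := by ring
  rw [Real.sq_rpow (norm_nonneg _), Real.sq_rpow hs, hp, hp'] at hamgm
  have hss : s ^ p * s ^ (2 - p) = s ^ 2 := by
    rw [← Real.rpow_add' hs (by norm_num), add_sub_cancel, Real.rpow_two]
  have hpar := sq_norm_add_add_sq_norm_sub a b
  have hc : (p - 1) ^ 2 / 4 ≤ p / 2 := by nlinarith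
  have hw2 : w ^ 2 ≤ s ^ 2 := by gcongr
  rw [clarksonDefect]
  nlinarith [mul_le_mul_of_nonneg_right hc (sub_nonneg.mpr hw2)]

lemma norm_sub_rpow_le_clarksonDefect_rpow_mul {p : ℝ} (hp1 : 1 < p) (hp2 : p ≤ 2) (a b : E) :
    ‖a - b‖ ^ p ≤ (4 / (p - 1) ^ 2) ^ (p / 2) * clarksonDefect p a b ^ (p / 2) *
      (2 ^ (p - 1) * (‖a‖ ^ p + ‖b‖ ^ p)) ^ (1 - p / 2) := by
  have hc : 0 < (p - 1) ^ 2 := by nlinarith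
  have hs : 0 ≤ ‖a‖ + ‖b‖ := by positivity
  have hD := clarksonDefect_nonneg hp1.le a b
  have h : ‖a - b‖ ^ 2 ≤ 4 / (p - 1) ^ 2 * clarksonDefect p a b * (‖a‖ + ‖b‖) ^ (2 - p) := by
    rw [mul_assoc, div_mul_eq_mul_div, le_div_iff₀ hc]
    linarith [sq_norm_sub_le_clarksonDefect_mul hp1 hp2 a b]
  have hS : (‖a‖ + ‖b‖) ^ p ≤ 2 ^ (p - 1) * (‖a‖ ^ p + ‖b‖ ^ p) :=
    Real.rpow_add_le_mul_rpow_add_rpow (norm_nonneg a) (norm_nonneg b) hp1.le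
  calc ‖a - b‖ ^ p = (‖a - b‖ ^ 2) ^ (p / 2) := by rw [Real.sq_rpow (norm_nonneg _)]; ring_nf
    _ ≤ (4 / (p - 1) ^ 2 * clarksonDefect p a b * (‖a‖ + ‖b‖) ^ (2 - p)) ^ (p / 2) := by
      gcongr
    _ = (4 / (p - 1) ^ 2) ^ (p / 2) * clarksonDefect p a b ^ (p / 2) *
        ((‖a‖ + ‖b‖) ^ p) ^ (1 - p / 2) := by
      rw [Real.mul_rpow (by positivity) (by positivity), Real.mul_rpow (by positivity) hD,
        ← Real.rpow_mul hs, ← Real.rpow_mul hs]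
      ring_nf
    _ ≤ _ := by gcongr; linarith

end Pointwise

section Holder

variable {α : Type*} [MeasurableSpace α] {μ : Measure α} {f g : α → ℝ} {θ : ℝ}

lemma MeasureTheory.Integrable.rpow_mul_rpow_one_sub (hf : Integrable f μ) (hg : Integrable g μ)
    (hf0 : 0 ≤ᵐ[μ] f) (hg0 : 0 ≤ᵐ[μ] g) (hθ0 : 0 ≤ θ) (hθ1 : θ ≤ 1) :
    Integrable (fun x ↦ f x ^ θ * g x ^ (1 - θ)) μ := by
  refine ((hf.const_mul θ).add (hg.const_mul (1 - θ))).mono'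
    ((hf.aemeasurable.pow_const θ).mul (hg.aemeasurable.pow_const _)).aestronglyMeasurable ?_
  filter_upwards [hf0, hg0] with x hfx hgx
  rw [Real.norm_of_nonneg (mul_nonneg (Real.rpow_nonneg hfx _) (Real.rpow_nonneg hgx _))]
  exact Real.geom_mean_le_arith_mean2_weighted hθ0 (sub_nonneg.mpr hθ1) hfx hgx
    (add_sub_cancel θ 1)

lemma MeasureTheory.integral_rpow_mul_rpow_one_sub_le (hf : Integrable f μ)
    (hg : Integrable g μ) (hf0 : 0 ≤ᵐ[μ] f) (hg0 : 0 ≤ᵐ[μ] g) (hθ0 : 0 ≤ θ) (hθ1 : θ ≤ 1) :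
    ∫ x, f x ^ θ * g x ^ (1 - θ) ∂μ ≤ (∫ x, f x ∂μ) ^ θ * (∫ x, g x ∂μ) ^ (1 - θ) := by
  have hθ1' : 0 ≤ 1 - θ := sub_nonneg.mpr hθ1
  have hIf := integral_nonneg_of_ae hf0
  have hIg := integral_nonneg_of_ae hg0
  rw [← ENNReal.ofReal_le_ofReal_iff (by positivity),
    ofReal_integral_eq_lintegral_ofReal (hf.rpow_mul_rpow_one_sub hg hf0 hg0 hθ0 hθ1)
      (by filter_upwards [hf0, hg0] with x hfx hgx
          exact mul_nonneg (Real.rpow_nonneg hfx _) (Real.rpow_nonneg hgx _)),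
    ENNReal.ofReal_mul (by positivity),
    ← ENNReal.ofReal_rpow_of_nonneg hIf hθ0, ← ENNReal.ofReal_rpow_of_nonneg hIg hθ1',
    ofReal_integral_eq_lintegral_ofReal hf hf0, ofReal_integral_eq_lintegral_ofReal hg hg0]
  calc ∫⁻ x, ENNReal.ofReal (f x ^ θ * g x ^ (1 - θ)) ∂μ
      = ∫⁻ x, ENNReal.ofReal (f x) ^ θ * ENNReal.ofReal (g x) ^ (1 - θ) ∂μ := by
        refine lintegral_congr_ae ?_
        filter_upwards [hf0, hg0] with x hfx hgx
        rw [ENNReal.ofReal_mul (Real.rpow_nonneg hfx _), ENNReal.ofReal_rpow_of_nonneg hfx hθ0,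
          ENNReal.ofReal_rpow_of_nonneg hgx hθ1']
    _ ≤ _ := ENNReal.lintegral_mul_norm_pow_le hf.aemeasurable.ennreal_ofReal
        hg.aemeasurable.ennreal_ofReal hθ0 hθ1' (add_sub_cancel θ 1)

end Holder

section Integral

variable {α : Type*} [MeasurableSpace α] {μ : Measure α}
  {E : Type*} [NormedAddCommGroup E] {f g : α → E} {p : ℝ}

lemma MeasureTheory.MemLp.integrable_norm_rpow_ofReal (hp : 0 < p)
    (hf : MemLp f (ENNReal.ofReal p) μ) : Integrable (fun x ↦ ‖f x‖ ^ p) μ := by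
  simpa [ENNReal.toReal_ofReal hp.le] using
    hf.integrable_norm_rpow (by simpa using hp) ENNReal.ofReal_ne_top

lemma integral_norm_sub_rpow_le_of_clarksonDefect_bound {K θ ε : ℝ} (hp : 1 ≤ p)
    (hf : MemLp f (ENNReal.ofReal p) μ) (hg : MemLp g (ENNReal.ofReal p) μ)
    (hK : 0 ≤ K) (hθ0 : 0 ≤ θ) (hθ1 : θ ≤ 1) (hε : 0 ≤ ε)
    (hbound : ∀ a b : E, ‖a - b‖ ^ p ≤
      K * clarksonDefect p a b ^ θ * (2 ^ (p - 1) * (‖a‖ ^ p + ‖b‖ ^ p)) ^ (1 - θ))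
    (hnear : (∫ x, ‖f x + g x‖ ^ p ∂μ) ≥
      (1 - ε) * ((2 : ℝ) ^ (p - 1) * (∫ x, ‖f x‖ ^ p ∂μ) +
        (2 : ℝ) ^ (p - 1) * (∫ x, ‖g x‖ ^ p ∂μ))) :
    (∫ x, ‖f x - g x‖ ^ p ∂μ) ≤
      K * 2 ^ (p - 1) * ε ^ θ * ((∫ x, ‖f x‖ ^ p ∂μ) + (∫ x, ‖g x‖ ^ p ∂μ)) := by
  have hp0 : 0 < p := by linarith
  set M := 2 ^ (p - 1) * ((∫ x, ‖f x‖ ^ p ∂μ) + (∫ x, ‖g x‖ ^ p ∂μ))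
  have hS : Integrable (fun x ↦ 2 ^ (p - 1) * (‖f x‖ ^ p + ‖g x‖ ^ p)) μ :=
    ((hf.integrable_norm_rpow_ofReal hp0).add (hg.integrable_norm_rpow_ofReal hp0)).const_mul _
  have hfg : Integrable (fun x ↦ ‖f x + g x‖ ^ p) μ := (hf.add hg).integrable_norm_rpow_ofReal hp0
  have hD : Integrable (fun x ↦ clarksonDefect p (f x) (g x)) μ := hS.sub hfg
  have hIS : ∫ x, 2 ^ (p - 1) * (‖f x‖ ^ p + ‖g x‖ ^ p) ∂μ = M := by
    rw [integral_const_mul, integral_add (hf.integrable_norm_rpow_ofReal hp0)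
      (hg.integrable_norm_rpow_ofReal hp0)]
  have hID : ∫ x, clarksonDefect p (f x) (g x) ∂μ ≤ ε * M := by
    simp only [clarksonDefect]
    rw [integral_sub hS hfg, hIS]
    linarith
  have hD0 : 0 ≤ᵐ[μ] fun x ↦ clarksonDefect p (f x) (g x) :=
    ae_of_all _ fun x ↦ clarksonDefect_nonneg hp (f x) (g x)
  have hS0 : 0 ≤ᵐ[μ] fun x ↦ 2 ^ (p - 1) * (‖f x‖ ^ p + ‖g x‖ ^ p) :=
    ae_of_all _ fun x ↦ by positivity
  have hM0 : 0 ≤ M := by simpa [hIS] using integral_nonneg_of_ae hS0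
  calc (∫ x, ‖f x - g x‖ ^ p ∂μ)
      ≤ ∫ x, K * (clarksonDefect p (f x) (g x) ^ θ *
          (2 ^ (p - 1) * (‖f x‖ ^ p + ‖g x‖ ^ p)) ^ (1 - θ)) ∂μ := by
        refine integral_mono_of_nonneg (ae_of_all _ fun x ↦ by positivity)
          ((hD.rpow_mul_rpow_one_sub hS hD0 hS0 hθ0 hθ1).const_mul K) (ae_of_all _ fun x ↦ ?_)
        simpa only [mul_assoc] using hbound (f x) (g x)
    _ ≤ K * ((ε * M) ^ θ * M ^ (1 - θ)) := by
        rw [integral_const_mul]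
        gcongr
        refine (integral_rpow_mul_rpow_one_sub_le hD hS hD0 hS0 hθ0 hθ1).trans ?_
        rw [hIS]
        gcongr
        exact integral_nonneg_of_ae hD0
    _ = K * 2 ^ (p - 1) * ε ^ θ * ((∫ x, ‖f x‖ ^ p ∂μ) + (∫ x, ‖g x‖ ^ p ∂μ)) := by
        rw [Real.mul_rpow hε hM0, mul_assoc, ← Real.rpow_add' hM0 (by simp), add_sub_cancel,
          Real.rpow_one]
        ring

end Integral

theorem clarkson_quantitative (p : ℝ) (hp : 1 < p) :
    ∃ (C γ : ℝ), 0 < C ∧ 0 < γ ∧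
      ∀ (α : Type) (_ : MeasurableSpace α) (μ : Measure α) (f g : α → ℂ),
        MemLp f (ENNReal.ofReal p) μ → MemLp g (ENNReal.ofReal p) μ →
        ∀ ε ∈ Set.Icc (0 : ℝ) 1,
          (∫ x, ‖f x + g x‖ ^ p ∂μ) ≥
            (1 - ε) * ((2 : ℝ) ^ (p - 1) * (∫ x, ‖f x‖ ^ p ∂μ) +
              (2 : ℝ) ^ (p - 1) * (∫ x, ‖g x‖ ^ p ∂μ)) →
          (∫ x, ‖f x - g x‖ ^ p ∂μ) ≤
            C * ε ^ γ * ((∫ x, ‖f x‖ ^ p ∂μ) + (∫ x, ‖g x‖ ^ p ∂μ)) := by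
  rcases le_or_gt 2 p with hp2 | hp2
  · refine ⟨2 ^ (p - 1), 1, by positivity, one_pos, ?_⟩
    intro α _ μ f g hf hg ε hε hnear
    have hbound (a b : ℂ) : ‖a - b‖ ^ p ≤
        1 * clarksonDefect p a b ^ (1 : ℝ) * (2 ^ (p - 1) * (‖a‖ ^ p + ‖b‖ ^ p)) ^ (1 - 1 : ℝ) := by
      simpa using norm_sub_rpow_le_clarksonDefect hp2 a b
    simpa only [one_mul] using integral_norm_sub_rpow_le_of_clarksonDefect_bound hp.le hf hg
      zero_le_one zero_le_one le_rfl hε.1 hbound hnear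
  · refine ⟨(4 / (p - 1) ^ 2) ^ (p / 2) * 2 ^ (p - 1), p / 2, by positivity, by positivity, ?_⟩
    intro α _ μ f g hf hg ε hε hnear
    exact integral_norm_sub_rpow_le_of_clarksonDefect_bound hp.le hf hg (by positivity)
      (by positivity) (by linarith) hε.1 (norm_sub_rpow_le_clarksonDefect_rpow_mul hp hp2.le) hnear
end

section
/- Let p ∈ [1,∞) and r ∈ [1,p]. There exists a constant C < ∞, depending only on p and r, such that for any measure space and any two nonnegative functions g1, g2 ∈ L^p, ‖g1 − g2‖_p^p ≤ C · ‖g1^r − g2^r‖_{p/r} · (‖g1‖_p + ‖g2‖_p)^{p−r}. -/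
/-!
The constant is `C = 1`. Pointwise, for `a, b ≥ 0` and `1 ≤ r ≤ p`, superadditivity of `t ↦ t ^ r`
gives `|a - b| ^ p ≤ |a ^ r - b ^ r| ^ (p / r) ≤ a ^ p + b ^ p`. Integrating, with
`A = ‖g₁ - g₂‖ₚᵖ`, `B = ‖g₁ʳ - g₂ʳ‖_{p/r}^{p/r}` and `N = ‖g₁‖ₚ + ‖g₂‖ₚ`, this reads
`A ≤ B ≤ Nᵖ`, and then `A ≤ B = B ^ (r / p) * B ^ ((p - r) / p) ≤ B ^ (r / p) * N ^ (p - r)`.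
-/

open MeasureTheory

namespace Real

variable {a b p r : ℝ}

lemma rpow_sub_le_rpow_sub_rpow (hb : 0 ≤ b) (hba : b ≤ a) (hr : 1 ≤ r) :
    (a - b) ^ r ≤ a ^ r - b ^ r := by
  have h := add_rpow_le_rpow_add (sub_nonneg.2 hba) hb hr
  rw [sub_add_cancel] at h
  linarith

lemma abs_sub_rpow_le_abs_rpow_sub_rpow (ha : 0 ≤ a) (hb : 0 ≤ b) (hr : 1 ≤ r) :
    |a - b| ^ r ≤ |a ^ r - b ^ r| := by
  wlog hba : b ≤ a generalizing a b
  · rw [abs_sub_comm, abs_sub_comm (a ^ r)]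
    exact this hb ha (le_of_not_ge hba)
  have hrba : b ^ r ≤ a ^ r := rpow_le_rpow hb hba (by linarith)
  rw [abs_of_nonneg (sub_nonneg.2 hba), abs_of_nonneg (sub_nonneg.2 hrba)]
  exact rpow_sub_le_rpow_sub_rpow hb hba hr

lemma abs_sub_rpow_le_rpow_add_rpow (ha : 0 ≤ a) (hb : 0 ≤ b) (hp : 0 ≤ p) :
    |a - b| ^ p ≤ a ^ p + b ^ p := by
  wlog hba : b ≤ a generalizing a b
  · rw [abs_sub_comm, add_comm]
    exact this hb ha (le_of_not_ge hba)
  calc |a - b| ^ p ≤ a ^ p := by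
        rw [abs_of_nonneg (sub_nonneg.2 hba)]
        exact rpow_le_rpow (sub_nonneg.2 hba) (by linarith) hp
    _ ≤ a ^ p + b ^ p := le_add_of_nonneg_right (rpow_nonneg hb p)

lemma rpow_rpow_div_of_nonneg (ha : 0 ≤ a) (hr : r ≠ 0) : (a ^ r) ^ (p / r) = a ^ p := by
  rw [← rpow_mul ha, mul_div_cancel₀ p hr]

lemma abs_sub_rpow_le_abs_rpow_sub_rpow_rpow_div (ha : 0 ≤ a) (hb : 0 ≤ b) (hr : 1 ≤ r)
    (hp : 0 ≤ p) : |a - b| ^ p ≤ |a ^ r - b ^ r| ^ (p / r) := by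
  have hr0 : r ≠ 0 := by positivity
  rw [← rpow_rpow_div_of_nonneg (abs_nonneg (a - b)) hr0]
  gcongr
  exact abs_sub_rpow_le_abs_rpow_sub_rpow ha hb hr

lemma abs_rpow_sub_rpow_rpow_div_le (ha : 0 ≤ a) (hb : 0 ≤ b) (hr : 0 < r) (hp : 0 ≤ p) :
    |a ^ r - b ^ r| ^ (p / r) ≤ a ^ p + b ^ p := by
  rw [← rpow_rpow_div_of_nonneg ha hr.ne' (p := p), ← rpow_rpow_div_of_nonneg hb hr.ne' (p := p)]
  exact abs_sub_rpow_le_rpow_add_rpow (rpow_nonneg ha r) (rpow_nonneg hb r) (by positivity)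

lemma add_le_rpow_one_div_add_rpow_one_div_rpow (ha : 0 ≤ a) (hb : 0 ≤ b) (hp : 1 ≤ p) :
    a + b ≤ (a ^ (1 / p) + b ^ (1 / p)) ^ p := by
  have h := add_rpow_le_rpow_add (rpow_nonneg ha (1 / p)) (rpow_nonneg hb (1 / p)) hp
  have hp0 : p ≠ 0 := by positivity
  rwa [one_div, rpow_inv_rpow ha hp0, rpow_inv_rpow hb hp0, ← one_div] at h

lemma le_rpow_div_mul_rpow_sub_of_le_rpow {A B N : ℝ} (hB : 0 ≤ B) (hN : 0 ≤ N) (hp : 0 < p)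
    (hrp : r ≤ p) (hAB : A ≤ B) (hBN : B ≤ N ^ p) : A ≤ B ^ (r / p) * N ^ (p - r) := by
  have hexp : r / p + (p - r) / p = 1 := by field_simp; ring
  calc A ≤ B := hAB
    _ = B ^ (r / p) * B ^ ((p - r) / p) := by
        rw [← rpow_add' hB (by rw [hexp]; exact one_ne_zero), hexp, rpow_one]
    _ ≤ B ^ (r / p) * (N ^ p) ^ ((p - r) / p) := by gcongr
    _ = B ^ (r / p) * N ^ (p - r) := by rw [← rpow_mul hN, mul_div_cancel₀ _ hp.ne']

end Real

section Integral

variable {α : Type*} [MeasurableSpace α] {μ : Measure α} {f g : α → ℝ} {p r : ℝ}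

lemma MeasureTheory.MemLp.integrable_abs_rpow (hp : 0 < p) (hf : MemLp f (.ofReal p) μ) :
    Integrable (fun x => |f x| ^ p) μ := by
  simpa [Real.norm_eq_abs, ENNReal.toReal_ofReal hp.le] using
    hf.integrable_norm_rpow (by simpa using hp) ENNReal.ofReal_ne_top

lemma integrable_abs_rpow_sub_rpow_rpow_div (hf : ∀ x, 0 ≤ f x) (hg : ∀ x, 0 ≤ g x)
    (hfp : MemLp f (.ofReal p) μ) (hgp : MemLp g (.ofReal p) μ) (hr : 0 < r) (hp : 0 < p) :
    Integrable (fun x => |f x ^ r - g x ^ r| ^ (p / r)) μ := by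
  refine ((hfp.integrable_abs_rpow hp).add (hgp.integrable_abs_rpow hp)).mono' ?_ ?_
  · have := hfp.aestronglyMeasurable.aemeasurable
    have := hgp.aestronglyMeasurable.aemeasurable
    exact AEMeasurable.aestronglyMeasurable (by fun_prop)
  · refine .of_forall fun x => ?_
    rw [Real.norm_of_nonneg (by positivity), Pi.add_apply, abs_of_nonneg (hf x),
      abs_of_nonneg (hg x)]
    exact Real.abs_rpow_sub_rpow_rpow_div_le (hf x) (hg x) hr hp.le

lemma integral_abs_sub_rpow_le (hf : ∀ x, 0 ≤ f x) (hg : ∀ x, 0 ≤ g x)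
    (hfp : MemLp f (.ofReal p) μ) (hgp : MemLp g (.ofReal p) μ) (hr : 1 ≤ r) (hp : 0 < p) :
    ∫ x, |f x - g x| ^ p ∂μ ≤ ∫ x, |f x ^ r - g x ^ r| ^ (p / r) ∂μ :=
  integral_mono_of_nonneg (.of_forall fun _ => by positivity)
    (integrable_abs_rpow_sub_rpow_rpow_div hf hg hfp hgp (by linarith) hp)
    (.of_forall fun x => Real.abs_sub_rpow_le_abs_rpow_sub_rpow_rpow_div (hf x) (hg x) hr hp.le)

lemma integral_abs_rpow_sub_rpow_rpow_div_le (hf : ∀ x, 0 ≤ f x) (hg : ∀ x, 0 ≤ g x)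
    (hfp : MemLp f (.ofReal p) μ) (hgp : MemLp g (.ofReal p) μ) (hr : 0 < r) (hp : 0 < p) :
    ∫ x, |f x ^ r - g x ^ r| ^ (p / r) ∂μ ≤ (∫ x, |f x| ^ p ∂μ) + ∫ x, |g x| ^ p ∂μ := by
  have hfi := hfp.integrable_abs_rpow hp
  have hgi := hgp.integrable_abs_rpow hp
  rw [← integral_add hfi hgi]
  refine integral_mono_of_nonneg (.of_forall fun _ => by positivity) (hfi.add hgi)
    (.of_forall fun x => ?_)
  dsimp only
  rw [abs_of_nonneg (hf x), abs_of_nonneg (hg x)]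
  exact Real.abs_rpow_sub_rpow_rpow_div_le (hf x) (hg x) hr hp.le

end Integral

theorem power_difference_bound (p r : ℝ) (hp : 1 ≤ p) (hr : 1 ≤ r) (hrp : r ≤ p) :
    ∃ C : ℝ, 0 < C ∧
      ∀ (α : Type) (_ : MeasurableSpace α) (μ : Measure α) (g1 g2 : α → ℝ),
        (∀ x, 0 ≤ g1 x) → (∀ x, 0 ≤ g2 x) →
        MemLp g1 (ENNReal.ofReal p) μ → MemLp g2 (ENNReal.ofReal p) μ →
        (∫ x, |g1 x - g2 x| ^ p ∂μ) ≤
          C * (∫ x, |g1 x ^ r - g2 x ^ r| ^ (p / r) ∂μ) ^ (r / p) *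
            ((∫ x, |g1 x| ^ p ∂μ) ^ (1 / p) + (∫ x, |g2 x| ^ p ∂μ) ^ (1 / p)) ^ (p - r) := by
  refine ⟨1, one_pos, fun α _ μ g1 g2 hg1 hg2 hg1p hg2p => ?_⟩
  have hp0 : 0 < p := by linarith
  have hr0 : 0 < r := by linarith
  have hI1 : 0 ≤ ∫ x, |g1 x| ^ p ∂μ := integral_nonneg fun _ => by positivity
  have hI2 : 0 ≤ ∫ x, |g2 x| ^ p ∂μ := integral_nonneg fun _ => by positivity
  rw [one_mul]
  exact Real.le_rpow_div_mul_rpow_sub_of_le_rpow (integral_nonneg fun _ => by positivity)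
    (by positivity) hp0 hrp (integral_abs_sub_rpow_le hg1 hg2 hg1p hg2p hr hp0)
    ((integral_abs_rpow_sub_rpow_rpow_div_le hg1 hg2 hg1p hg2p hr0 hp0).trans
      (Real.add_le_rpow_one_div_add_rpow_one_div_rpow hI1 hI2 hp))
end

section
/- Let d ≥ 1 and let p1, p2, p3 ∈ (1,∞) satisfy 1/p1 + 1/p2 + 1/p3 = 2. If nonzero functions f_j ∈ ℓ^{p_j}(ℤ^d) (j = 1,2,3) attain equality in Young's inequality, i.e. |∑_{x,y∈ℤ^d} f1(x) f2(y) f3(x+y)| = ‖f1‖_{p1} ‖f2‖_{p2} ‖f3‖_{p3}, then the support of each f_j is a single point z_j ∈ ℤ^d, and z3 = z1 + z2. -/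
/-!
Normalise `|f_j|^{p_j}` to probability densities `u, v, w` and put `a_j = 1/p_j`. The summand
`|f₁(x) f₂(y) f₃(x+y)| / ∏ ‖f_j‖` is `u(x)^{a₁} v(y)^{a₂} w(x+y)^{a₃}`; since `a₁ + a₂ + a₃ = 2`
this equals `(v(y) w(x+y))^{1-a₁} (u(x) w(x+y))^{1-a₂} (u(x) v(y))^{1-a₃}`, and weighted AM-GM
bounds it by a convex combination of the three pairwise products, each of which sums to `1`
(after a shear of `ℤ^d × ℤ^d`). So equality in Young's inequality forces equality in AM-GM at
every point: `v(y) w(x+y) = u(x) w(x+y) = u(x) v(y)`. Hence `w(x + ·) = v` whenever `u(x) ≠ 0`,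
so `w` has period `x - x'` for any `x, x'` in the support of `u`; a nonzero summable function on a
torsion-free group has no nonzero period, so the support of `u` is a point, and likewise for `v`
and `w`.
-/

open Real Function

namespace Real

theorem geom_mean_eq_arith_mean3_weighted_iff_of_pos {w₁ w₂ w₃ p₁ p₂ p₃ : ℝ} (hw₁ : 0 < w₁)
    (hw₂ : 0 < w₂) (hw₃ : 0 < w₃) (hp₁ : 0 ≤ p₁) (hp₂ : 0 ≤ p₂) (hp₃ : 0 ≤ p₃)
    (hw : w₁ + w₂ + w₃ = 1) :
    p₁ ^ w₁ * p₂ ^ w₂ * p₃ ^ w₃ = w₁ * p₁ + w₂ * p₂ + w₃ * p₃ ↔ p₁ = p₂ ∧ p₂ = p₃ := by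
  have := geom_mean_eq_arith_mean_weighted_iff_of_pos Finset.univ ![w₁, w₂, w₃] ![p₁, p₂, p₃]
  simp only [Finset.mem_univ, forall_const, Fin.forall_fin_succ, Fin.isValue,
    Matrix.cons_val_zero, Matrix.cons_val_succ, Matrix.cons_val_fin_one, Fin.sum_univ_three,
    Matrix.cons_val_one, Matrix.cons_val, Fin.prod_univ_three, true_and, and_true,
    and_imp] at this
  grind

variable {x y z a b c : ℝ}

theorem rpow_mul_rpow_mul_rpow_eq_pairwise (hx : 0 ≤ x) (hy : 0 ≤ y) (hz : 0 ≤ z)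
    (ha : a < 1) (hb : b < 1) (hc : c < 1) (habc : a + b + c = 2) :
    x ^ a * y ^ b * z ^ c = (y * z) ^ (1 - a) * (x * z) ^ (1 - b) * (x * y) ^ (1 - c) := by
  calc x ^ a * y ^ b * z ^ c
      = x ^ ((1 - b) + (1 - c)) * y ^ ((1 - a) + (1 - c)) * z ^ ((1 - a) + (1 - b)) := by
        congr 3 <;> linarith
    _ = _ := by
        rw [rpow_add' hx (by linarith), rpow_add' hy (by linarith), rpow_add' hz (by linarith),
          mul_rpow hy hz, mul_rpow hx hz, mul_rpow hx hy]
        ring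

theorem rpow_mul_rpow_mul_rpow_le (hx : 0 ≤ x) (hy : 0 ≤ y) (hz : 0 ≤ z)
    (ha : a < 1) (hb : b < 1) (hc : c < 1) (habc : a + b + c = 2) :
    x ^ a * y ^ b * z ^ c ≤ (1 - a) * (y * z) + (1 - b) * (x * z) + (1 - c) * (x * y) := by
  rw [rpow_mul_rpow_mul_rpow_eq_pairwise hx hy hz ha hb hc habc]
  exact geom_mean_le_arith_mean3_weighted (by linarith) (by linarith) (by linarith)
    (by positivity) (by positivity) (by positivity) (by linarith)

theorem rpow_mul_rpow_mul_rpow_eq_iff (hx : 0 ≤ x) (hy : 0 ≤ y) (hz : 0 ≤ z)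
    (ha : a < 1) (hb : b < 1) (hc : c < 1) (habc : a + b + c = 2) :
    x ^ a * y ^ b * z ^ c = (1 - a) * (y * z) + (1 - b) * (x * z) + (1 - c) * (x * y) ↔
      y * z = x * z ∧ x * z = x * y := by
  rw [rpow_mul_rpow_mul_rpow_eq_pairwise hx hy hz ha hb hc habc]
  exact geom_mean_eq_arith_mean3_weighted_iff_of_pos (by linarith) (by linarith) (by linarith)
    (by positivity) (by positivity) (by positivity) (by linarith)

end Real

section YoungForm

variable {G : Type*} [AddGroup G] {u v w : G → ℝ} {a b c : ℝ}

theorem HasSum.mul_comp_add_left {s t : ℝ} (hu : HasSum u s) (hw : HasSum w t)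
    (hu0 : 0 ≤ u) (hw0 : 0 ≤ w) :
    HasSum (fun q : G × G => u q.1 * w (q.1 + q.2)) (s * t) := by
  have h := hu.mul hw (hu.summable.mul_of_nonneg hw.summable hu0 hw0)
  exact (Equiv.prodShear (Equiv.refl G) Equiv.addLeft).hasSum_iff.mpr h

theorem HasSum.mul_comp_add_right {s t : ℝ} (hv : HasSum v s) (hw : HasSum w t)
    (hv0 : 0 ≤ v) (hw0 : 0 ≤ w) :
    HasSum (fun q : G × G => v q.2 * w (q.1 + q.2)) (s * t) := by
  have h := hv.mul hw (hv.summable.mul_of_nonneg hw.summable hv0 hw0)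
  exact ((Equiv.prodComm G G).trans
    (Equiv.prodShear (Equiv.refl G) Equiv.addRight)).hasSum_iff.mpr h

theorem hasSum_young_majorant (hu0 : 0 ≤ u) (hv0 : 0 ≤ v) (hw0 : 0 ≤ w) (hu : HasSum u 1)
    (hv : HasSum v 1) (hw : HasSum w 1) (habc : a + b + c = 2) :
    HasSum (fun q : G × G => (1 - a) * (v q.2 * w (q.1 + q.2)) +
      (1 - b) * (u q.1 * w (q.1 + q.2)) + (1 - c) * (u q.1 * v q.2)) 1 := by
  have h := (((hv.mul_comp_add_right hw hv0 hw0).mul_left (1 - a)).add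
    ((hu.mul_comp_add_left hw hu0 hw0).mul_left (1 - b))).add
    ((hu.mul hv (hu.summable.mul_of_nonneg hv.summable hu0 hv0)).mul_left (1 - c))
  simpa only [mul_one, show 1 - a + (1 - b) + (1 - c) = 1 by linarith] using h

theorem summable_young (hu0 : 0 ≤ u) (hv0 : 0 ≤ v) (hw0 : 0 ≤ w) (hu : HasSum u 1)
    (hv : HasSum v 1) (hw : HasSum w 1) (ha : a < 1) (hb : b < 1) (hc : c < 1)
    (habc : a + b + c = 2) :
    Summable fun q : G × G => u q.1 ^ a * v q.2 ^ b * w (q.1 + q.2) ^ c :=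
  (hasSum_young_majorant hu0 hv0 hw0 hu hv hw habc).summable.of_nonneg_of_le
    (fun q => mul_nonneg (mul_nonneg (rpow_nonneg (hu0 q.1) a) (rpow_nonneg (hv0 q.2) b))
      (rpow_nonneg (hw0 (q.1 + q.2)) c))
    fun q => rpow_mul_rpow_mul_rpow_le (hu0 q.1) (hv0 q.2) (hw0 (q.1 + q.2)) ha hb hc habc

theorem young_eq_of_one_le_tsum (hu0 : 0 ≤ u) (hv0 : 0 ≤ v) (hw0 : 0 ≤ w) (hu : HasSum u 1)
    (hv : HasSum v 1) (hw : HasSum w 1) (ha : a < 1) (hb : b < 1) (hc : c < 1)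
    (habc : a + b + c = 2)
    (h : 1 ≤ ∑' q : G × G, u q.1 ^ a * v q.2 ^ b * w (q.1 + q.2) ^ c) (x y : G) :
    v y * w (x + y) = u x * w (x + y) ∧ u x * w (x + y) = u x * v y := by
  refine (rpow_mul_rpow_mul_rpow_eq_iff (hu0 x) (hv0 y) (hw0 _) ha hb hc habc).mp ?_
  by_contra hne
  have hlt := hasSum_lt (i := (x, y))
    (fun q : G × G => rpow_mul_rpow_mul_rpow_le (hu0 q.1) (hv0 q.2) (hw0 (q.1 + q.2)) ha hb hc habc)
    (lt_of_le_of_ne (rpow_mul_rpow_mul_rpow_le (hu0 x) (hv0 y) (hw0 _) ha hb hc habc) hne)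
    (summable_young hu0 hv0 hw0 hu hv hw ha hb hc habc).hasSum
    (hasSum_young_majorant hu0 hv0 hw0 hu hv hw habc)
  linarith

end YoungForm

section Support

variable {G : Type*} [AddCommGroup G] [IsAddTorsionFree G]

theorem eq_zero_of_summable_of_add_periodic {M : Type*} [AddCommGroup M] [TopologicalSpace M]
    [IsTopologicalAddGroup M] [T2Space M] {f : G → M} (hf : Summable f) {t : G} (ht : t ≠ 0)
    (hper : ∀ z, f (z + t) = f z) : f = 0 := by
  funext z
  have hinj : Injective fun n : ℕ => z + n • t := fun m n h => by
    rw [add_right_inj, ← natCast_zsmul, ← natCast_zsmul] at h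
    simpa using smul_left_injective ℤ ht h
  have hconst : ∀ n : ℕ, f (z + n • t) = f z := fun n => by
    induction n with
    | zero => simp
    | succ n ih => rw [succ_nsmul, ← add_assoc, hper, ih]
  have hlim := hf.tendsto_cofinite_zero.comp hinj.tendsto_cofinite
  simp only [comp_def, hconst] at hlim
  exact tendsto_nhds_unique tendsto_const_nhds hlim

theorem support_eq_singleton_of_young_eq {u v w : G → ℝ} (hw : Summable w)
    (hrel : ∀ x y, v y * w (x + y) = u x * w (x + y) ∧ u x * w (x + y) = u x * v y)
    {x₀ y₀ : G} (hx₀ : u x₀ ≠ 0) (hy₀ : v y₀ ≠ 0) :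
    support u = {x₀} ∧ support v = {y₀} ∧ support w = {x₀ + y₀} := by
  have hwv : ∀ x, u x ≠ 0 → ∀ y, w (x + y) = v y := fun x hx y =>
    mul_left_cancel₀ hx (hrel x y).2
  have hwu : ∀ y, v y ≠ 0 → ∀ x, w (x + y) = u x := fun y hy x =>
    mul_left_cancel₀ hy (((hrel x y).1.trans (hrel x y).2).trans (mul_comm _ _))
  have hw₀ : w ≠ 0 := fun h => hy₀ (by rw [← hwv x₀ hx₀ y₀, h, Pi.zero_apply])
  have hu : ∀ x, u x ≠ 0 → x = x₀ := fun x hx => by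
    by_contra hne
    refine hw₀ (eq_zero_of_summable_of_add_periodic hw (sub_ne_zero.mpr hne) fun z => ?_)
    calc w (z + (x - x₀)) = w (x + (z - x₀)) := by abel_nf
      _ = w (x₀ + (z - x₀)) := by rw [hwv x hx, hwv x₀ hx₀]
      _ = w z := by rw [add_sub_cancel]
  have hv : ∀ y, v y ≠ 0 → y = y₀ := fun y hy => by
    by_contra hne
    refine hw₀ (eq_zero_of_summable_of_add_periodic hw (sub_ne_zero.mpr hne) fun z => ?_)
    calc w (z + (y - y₀)) = w ((z - y₀) + y) := by abel_nf
      _ = w ((z - y₀) + y₀) := by rw [hwu y hy, hwu y₀ hy₀]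
      _ = w z := by rw [sub_add_cancel]
  refine ⟨?_, ?_, ?_⟩ <;> rw [Set.eq_singleton_iff_unique_mem] <;> simp only [mem_support]
  · exact ⟨hx₀, hu⟩
  · exact ⟨hy₀, hv⟩
  · refine ⟨by rwa [hwv x₀ hx₀], fun z hz => ?_⟩
    rw [← add_sub_cancel x₀ z, hwv x₀ hx₀] at hz
    rw [← hv _ hz, add_sub_cancel]

end Support

section LpDensity

variable {G E : Type*} [NormedAddCommGroup E] {p : ℝ}

noncomputable def lpDensity (f : G → E) (p : ℝ) (x : G) : ℝ :=
  ‖f x‖ ^ p / ∑' y, ‖f y‖ ^ p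

theorem lpDensity_nonneg (f : G → E) (p : ℝ) : 0 ≤ lpDensity f p := fun x =>
  div_nonneg (rpow_nonneg (norm_nonneg (f x)) p)
    (tsum_nonneg fun y => rpow_nonneg (norm_nonneg (f y)) p)

variable {f : G → E} (hs : Summable fun x => ‖f x‖ ^ p) (hf : f ≠ 0)
include hs hf

theorem tsum_rpow_norm_pos : 0 < ∑' x, ‖f x‖ ^ p := by
  obtain ⟨x, hx⟩ := Function.ne_iff.mp hf
  exact hs.tsum_pos (fun y => rpow_nonneg (norm_nonneg _) p) x
    (rpow_pos_of_pos (norm_pos_iff.mpr hx) p)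

theorem hasSum_lpDensity : HasSum (lpDensity f p) 1 := by
  have h := hs.hasSum.div_const (∑' x, ‖f x‖ ^ p)
  rwa [div_self (tsum_rpow_norm_pos hs hf).ne'] at h

theorem support_lpDensity (hp : p ≠ 0) : support (lpDensity f p) = support f := by
  ext x
  simp [lpDensity, (tsum_rpow_norm_pos hs hf).ne', hp]

end LpDensity

section Pnorm

variable {G : Type*} {f : G → ℂ} {p : ℝ} (hs : Summable fun x => ‖f x‖ ^ p) (hf : f ≠ 0)
include hs hf

theorem pnorm_pos : 0 < pnorm f p :=
  rpow_pos_of_pos (tsum_rpow_norm_pos hs hf) _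

theorem norm_eq_pnorm_mul_lpDensity_rpow (hp : p ≠ 0) (x : G) :
    ‖f x‖ = pnorm f p * lpDensity f p x ^ (1 / p) := by
  have hA := tsum_rpow_norm_pos hs hf
  rw [pnorm, lpDensity, div_rpow (rpow_nonneg (norm_nonneg _) p) hA.le,
    ← rpow_mul (norm_nonneg _), mul_one_div_cancel hp, rpow_one,
    mul_div_cancel₀ _ (rpow_pos_of_pos hA _).ne']

end Pnorm

section YoungEquality

variable {G : Type*} [AddGroup G]

theorem young_eq_lpDensity_of_norm_tsum_eq {p1 p2 p3 : ℝ} (hp1 : 1 < p1) (hp2 : 1 < p2)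
    (hp3 : 1 < p3) (hsum : 1 / p1 + 1 / p2 + 1 / p3 = 2) {f1 f2 f3 : G → ℂ}
    (h1 : f1 ≠ 0) (h2 : f2 ≠ 0) (h3 : f3 ≠ 0) (hs1 : Summable fun x => ‖f1 x‖ ^ p1)
    (hs2 : Summable fun x => ‖f2 x‖ ^ p2) (hs3 : Summable fun x => ‖f3 x‖ ^ p3)
    (heq : ‖∑' q : G × G, f1 q.1 * f2 q.2 * f3 (q.1 + q.2)‖ =
      pnorm f1 p1 * pnorm f2 p2 * pnorm f3 p3) (x y : G) :
    let u := lpDensity f1 p1; let v := lpDensity f2 p2; let w := lpDensity f3 p3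
    v y * w (x + y) = u x * w (x + y) ∧ u x * w (x + y) = u x * v y := by
  intro u v w
  have hu := hasSum_lpDensity hs1 h1
  have hv := hasSum_lpDensity hs2 h2
  have hw := hasSum_lpDensity hs3 h3
  have ha : 1 / p1 < 1 := (div_lt_one (by positivity)).mpr hp1
  have hb : 1 / p2 < 1 := (div_lt_one (by positivity)).mpr hp2
  have hc : 1 / p3 < 1 := (div_lt_one (by positivity)).mpr hp3
  set C := pnorm f1 p1 * pnorm f2 p2 * pnorm f3 p3
  have hC : 0 < C := by
    have := pnorm_pos hs1 h1; have := pnorm_pos hs2 h2; have := pnorm_pos hs3 h3; positivity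
  have hnorm : ∀ q : G × G, ‖f1 q.1 * f2 q.2 * f3 (q.1 + q.2)‖ =
      C * (u q.1 ^ (1 / p1) * v q.2 ^ (1 / p2) * w (q.1 + q.2) ^ (1 / p3)) := fun q => by
    rw [norm_mul, norm_mul, norm_eq_pnorm_mul_lpDensity_rpow hs1 h1 (by positivity),
      norm_eq_pnorm_mul_lpDensity_rpow hs2 h2 (by positivity),
      norm_eq_pnorm_mul_lpDensity_rpow hs3 h3 (by positivity)]
    ring
  have hF := summable_young (lpDensity_nonneg f1 p1) (lpDensity_nonneg f2 p2)
    (lpDensity_nonneg f3 p3) hu hv hw ha hb hc hsum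
  refine young_eq_of_one_le_tsum (lpDensity_nonneg f1 p1) (lpDensity_nonneg f2 p2)
    (lpDensity_nonneg f3 p3) hu hv hw ha hb hc hsum (le_of_mul_le_mul_left ?_ hC) x y
  calc C * 1 = ‖∑' q : G × G, f1 q.1 * f2 q.2 * f3 (q.1 + q.2)‖ := by rw [mul_one, heq]
    _ ≤ ∑' q : G × G, ‖f1 q.1 * f2 q.2 * f3 (q.1 + q.2)‖ :=
        norm_tsum_le_tsum_norm ((summable_congr hnorm).mpr (hF.mul_left C))
    _ = _ := by rw [tsum_congr hnorm, tsum_mul_left]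

end YoungEquality

theorem young_extremizers_Zd_general (d : ℕ)
    (p1 p2 p3 : ℝ) (hp1 : 1 < p1) (hp2 : 1 < p2) (hp3 : 1 < p3)
    (hsum : 1 / p1 + 1 / p2 + 1 / p3 = 2)
    (f1 f2 f3 : (Fin d → ℤ) → ℂ)
    (h1 : f1 ≠ 0) (h2 : f2 ≠ 0) (h3 : f3 ≠ 0)
    (hs1 : Summable fun x => ‖f1 x‖ ^ p1)
    (hs2 : Summable fun x => ‖f2 x‖ ^ p2)
    (hs3 : Summable fun x => ‖f3 x‖ ^ p3)
    (heq : ‖∑' q : (Fin d → ℤ) × (Fin d → ℤ), f1 q.1 * f2 q.2 * f3 (q.1 + q.2)‖ =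
      pnorm f1 p1 * pnorm f2 p2 * pnorm f3 p3) :
    ∃ z1 z2 z3 : Fin d → ℤ, z3 = z1 + z2 ∧
      Function.support f1 = {z1} ∧
      Function.support f2 = {z2} ∧
      Function.support f3 = {z3} := by
  obtain ⟨x₀, hx₀⟩ := Function.ne_iff.mp h1
  obtain ⟨y₀, hy₀⟩ := Function.ne_iff.mp h2
  have hsupp1 := support_lpDensity hs1 h1 (by positivity)
  have hsupp2 := support_lpDensity hs2 h2 (by positivity)
  have hsupp3 := support_lpDensity hs3 h3 (by positivity)
  obtain ⟨hsu, hsv, hsw⟩ := support_eq_singleton_of_young_eq (hasSum_lpDensity hs3 h3).summable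
    (young_eq_lpDensity_of_norm_tsum_eq hp1 hp2 hp3 hsum h1 h2 h3 hs1 hs2 hs3 heq)
    (show x₀ ∈ support (lpDensity f1 p1) by rwa [hsupp1])
    (show y₀ ∈ support (lpDensity f2 p2) by rwa [hsupp2])
  rw [hsupp1] at hsu
  rw [hsupp2] at hsv
  rw [hsupp3] at hsw
  exact ⟨x₀, y₀, x₀ + y₀, rfl, hsu, hsv, hsw⟩

theorem young_extremizers_Zd (d : ℕ) (hd : 1 ≤ d)
    (p1 p2 p3 : ℝ) (hp1 : 1 < p1) (hp2 : 1 < p2) (hp3 : 1 < p3)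
    (hsum : 1 / p1 + 1 / p2 + 1 / p3 = 2)
    (f1 f2 f3 : (Fin d → ℤ) → ℂ)
    (h1 : f1 ≠ 0) (h2 : f2 ≠ 0) (h3 : f3 ≠ 0)
    (hs1 : Summable fun x => ‖f1 x‖ ^ p1)
    (hs2 : Summable fun x => ‖f2 x‖ ^ p2)
    (hs3 : Summable fun x => ‖f3 x‖ ^ p3)
    (heq : ‖∑' q : (Fin d → ℤ) × (Fin d → ℤ), f1 q.1 * f2 q.2 * f3 (q.1 + q.2)‖ =
      pnorm f1 p1 * pnorm f2 p2 * pnorm f3 p3) :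
    ∃ z1 z2 z3 : Fin d → ℤ, z3 = z1 + z2 ∧
      Function.support f1 = {z1} ∧
      Function.support f2 = {z2} ∧
      Function.support f3 = {z3} :=
  young_extremizers_Zd_general d p1 p2 p3 hp1 hp2 hp3 hsum f1 f2 f3 h1 h2 h3 hs1 hs2 hs3 heq
end
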